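/- arXiv:1905.02844 — 4 statements merged into one kernel-verified Lean document; each statement's English description precedes it below -/
import Mathlib

section
/- For every k ≥ 3, there exists a k-DSMI-CYC instance (preference lists may be incomplete) that admits no weakly stable matching. -/
open Classical

/-- Cyclic successor on `Fin k` (addition of `1` modulo `k`). -/
def fsucc {k : ℕ} (t : Fin k) : Fin k := ⟨(t.1 + 1) % k, Nat.mod_lt _ t.pos⟩

/-- Cyclic addition of a natural number, modulo `k`. -/
def fadd {k : ℕ} (t : Fin k) (s : ℕ) : Fin k := ⟨(t.1 + s) % k, Nat.mod_lt _ t.pos⟩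

/-- An agent consists of an identifier and a type in `{0, …, k-1}`. -/
abbrev Agent (ι : Type) (k : ℕ) := ι × Fin k

/-- A preference profile of a `k`-DSMI-CYC instance over identifier set `ι`:
each agent has a list of agents. -/
abbrev Prefs (ι : Type) (k : ℕ) := Agent ι k → List (Agent ι k)

/-- Validity of a `k`-DSMI-CYC instance: each preference list is duplicate-free and
contains only agents of the cyclically next type. -/
def ValidPrefs {ι : Type} {k : ℕ} (P : Prefs ι k) : Prop :=
  (∀ a, (P a).Nodup) ∧ ∀ a b, b ∈ P a → b.2 = fsucc a.2

/-- Completeness: every agent of the next type appears in the preference list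
(this is the `k`-DSM-CYC special case). -/
def CompletePrefs {ι : Type} {k : ℕ} (P : Prefs ι k) : Prop :=
  ∀ a b : Agent ι k, b.2 = fsucc a.2 → b ∈ P a

/-- `a` prefers `b` to `c`: `b` appears in `a`'s list, and `c` appears later or not at all. -/
def Prefers {ι : Type} [DecidableEq ι] {k : ℕ} (P : Prefs ι k) (a b c : Agent ι k) : Prop :=
  b ∈ P a ∧ (c ∉ P a ∨ (P a).idxOf b < (P a).idxOf c)

/-- A family: a `k`-tuple where the `t`-th member has type `t` and finds the next member
acceptable. -/
def IsFamily {ι : Type} {k : ℕ} (P : Prefs ι k) (F : Fin k → Agent ι k) : Prop :=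
  ∀ t, (F t).2 = t ∧ F (fsucc t) ∈ P (F t)

/-- A matching: a set of pairwise agent-disjoint families. -/
def IsMatching {ι : Type} {k : ℕ} (P : Prefs ι k) (μ : Set (Fin k → Agent ι k)) : Prop :=
  (∀ F ∈ μ, IsFamily P F) ∧ ∀ F ∈ μ, ∀ F' ∈ μ, ∀ t, F t = F' t → F = F'

/-- The partner `μ(a)` of agent `a` in matching `μ`: the next member of a family of `μ`
containing `a`, and `a` itself if `a` is unmatched. -/
noncomputable def partner {ι : Type} {k : ℕ} (μ : Set (Fin k → Agent ι k)) (a : Agent ι k) :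
    Agent ι k :=
  if h : ∃ F ∈ μ, F a.2 = a then h.choose (fsucc a.2) else a

/-- A strongly blocking family of `μ`: each member prefers the next member to its partner. -/
def StronglyBlocks {ι : Type} [DecidableEq ι] {k : ℕ} (P : Prefs ι k)
    (μ : Set (Fin k → Agent ι k)) (F : Fin k → Agent ι k) : Prop :=
  IsFamily P F ∧ ∀ t, Prefers P (F t) (F (fsucc t)) (partner μ (F t))

/-- A weakly stable matching: a matching admitting no strongly blocking family. -/
def WeaklyStable {ι : Type} [DecidableEq ι] {k : ℕ} (P : Prefs ι k)
    (μ : Set (Fin k → Agent ι k)) : Prop :=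
  IsMatching P μ ∧ ∀ F, ¬ StronglyBlocks P μ F


/-! ### Auxiliary construction -/

def tgtK : Fin 5 → Fin 5 := ![0, 1, 1, 2, 2]
def bidK : Fin 5 → Fin 5 := ![2, 3, 0, 2, 3]
def cidK : Fin 5 → Fin 5 := ![1, 2, 1, 3, 0]

def gid (m : Fin 5) (s : ℕ) : Fin 5 :=
  if s = 0 then tgtK m else if s = 1 then bidK m else if s = 2 then cidK m else m

def G {k : ℕ} (m : Fin 5) (t : Fin k) : Agent (Fin 5) k := (gid m t.1, t)

def plist (i : Fin 5) (s : ℕ) : List (Fin 5) :=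
  if s = 0 then ![[0], [1, 2], [3, 4], [], []] i
  else if s = 1 then ![[2], [], [0, 3], [4, 1], []] i
  else if s = 2 then ![[4], [2, 0], [1], [3], []] i
  else [i]

def Pk {k : ℕ} : Prefs (Fin 5) k := fun a => (plist a.1 a.2.1).map (fun m => G m (fsucc a.2))

lemma gid_big (m : Fin 5) {s : ℕ} (h : 3 ≤ s) : gid m s = m := by
  unfold gid
  rw [if_neg (by omega), if_neg (by omega), if_neg (by omega)]

lemma plist_big (i : Fin 5) {s : ℕ} (h : 3 ≤ s) : plist i s = [i] := by
  unfold plist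
  rw [if_neg (by omega), if_neg (by omega), if_neg (by omega)]

lemma self_not_mem {k : ℕ} (hk : 3 ≤ k) (a : Agent (Fin 5) k) : a ∉ Pk a := by
  intro h
  obtain ⟨m, -, he⟩ := List.mem_map.1 h
  have hsnd : fsucc a.2 = a.2 := congrArg Prod.snd he
  have hval : (a.2.1 + 1) % k = a.2.1 := congrArg Fin.val hsnd
  have h2 := a.2.2
  rcases Nat.lt_or_ge (a.2.1 + 1) k with hlt | hge
  · rw [Nat.mod_eq_of_lt hlt] at hval; omega
  · have hh : a.2.1 + 1 = k := by omega
    rw [hh, Nat.mod_self] at hval; omega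

lemma Gfam {k : ℕ} (hk : 3 ≤ k) (m : Fin 5) : IsFamily (Pk (k := k)) (G m) := by
  intro t
  refine ⟨rfl, ?_⟩
  show G m (fsucc t) ∈ (plist (gid m t.1) t.1).map (fun x => G x (fsucc t))
  refine List.mem_map.2 ⟨m, ?_, rfl⟩
  rcases Nat.lt_or_ge t.1 3 with h | h
  · exact (by decide : ∀ (x : Fin 5) (s : Fin 3), x ∈ plist (gid x s.1) s.1) m ⟨t.1, h⟩
  · rw [gid_big m h, plist_big m h]
    exact List.mem_singleton.2 rfl

lemma validK {k : ℕ} (hk : 3 ≤ k) : ValidPrefs (Pk (k := k)) := by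
  constructor
  · rintro ⟨i, t⟩
    show ((plist i t.1).map (fun m => G m (fsucc t))).Nodup
    have hnd : (plist i t.1).Nodup := by
      rcases Nat.lt_or_ge t.1 3 with h | h
      · exact (by decide : ∀ (i' : Fin 5) (s : Fin 3), (plist i' s.1).Nodup) i ⟨t.1, h⟩
      · rw [plist_big i h]; exact List.nodup_singleton _
    refine List.Nodup.map_on ?_ hnd
    intro x hx y hy he
    have hg : gid x (fsucc t).1 = gid y (fsucc t).1 := congrArg Prod.fst he
    rcases Nat.lt_or_ge t.1 3 with h | h
    · by_cases h0 : t.1 = 0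
      · rw [h0] at hx hy
        have hv : (fsucc t).1 = 1 := by
          show (t.1 + 1) % k = 1
          rw [h0]; exact Nat.mod_eq_of_lt (by omega)
        rw [hv] at hg
        exact (by decide : ∀ (i' x' y' : Fin 5), x' ∈ plist i' 0 → y' ∈ plist i' 0 →
          gid x' 1 = gid y' 1 → x' = y') i x y hx hy hg
      · by_cases h1 : t.1 = 1
        · rw [h1] at hx hy
          have hv : (fsucc t).1 = 2 := by
            show (t.1 + 1) % k = 2
            rw [h1]; exact Nat.mod_eq_of_lt (by omega)
          rw [hv] at hg
          exact (by decide : ∀ (i' x' y' : Fin 5), x' ∈ plist i' 1 → y' ∈ plist i' 1 →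
            gid x' 2 = gid y' 2 → x' = y') i x y hx hy hg
        · have h2 : t.1 = 2 := by omega
          rw [h2] at hx hy
          have hv : (fsucc t).1 = 3 % k := by
            show (t.1 + 1) % k = 3 % k
            rw [h2]
          rcases eq_or_lt_of_le hk with hk3 | hk3
          · have hv0 : (fsucc t).1 = 0 := by rw [hv, ← hk3]
            rw [hv0] at hg
            exact (by decide : ∀ (i' x' y' : Fin 5), x' ∈ plist i' 2 → y' ∈ plist i' 2 →
              gid x' 0 = gid y' 0 → x' = y') i x y hx hy hg
          · have hv3 : (fsucc t).1 = 3 := by rw [hv]; exact Nat.mod_eq_of_lt hk3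
            rw [hv3] at hg
            rwa [gid_big x (by norm_num), gid_big y (by norm_num)] at hg
    · rw [plist_big i h] at hx hy
      rw [List.mem_singleton] at hx hy
      rw [hx, hy]
  · intro a b h
    obtain ⟨m, -, rfl⟩ := List.mem_map.1 h
    rfl

lemma classifyK {k : ℕ} (hk : 3 ≤ k) (F : Fin k → Agent (Fin 5) k)
    (hF : IsFamily (Pk (k := k)) F) : ∃ m : Fin 5, F = G m := by
  have h0k : 0 < k := by omega
  have h1k : 1 < k := by omega
  have h2k : 2 < k := by omega
  let tk : ℕ → Fin k := fun s => ⟨s % k, Nat.mod_lt _ h0k⟩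
  have hfs : ∀ s : ℕ, fsucc (tk s) = tk (s + 1) := fun s => Fin.ext (Nat.mod_add_mod s k 1)
  have hval : ∀ s : ℕ, s < k → (tk s).1 = s := fun s hs => Nat.mod_eq_of_lt hs
  have hstep : ∀ (i : Fin 5) (s : ℕ) (b : Agent (Fin 5) k), b ∈ Pk (i, tk s) →
      ∃ m ∈ plist i ((tk s).1), G m (fsucc (tk s)) = b := fun i s b h => List.mem_map.1 h
  have e0 : F (tk 0) = ((F (tk 0)).1, tk 0) := Prod.ext_iff.2 ⟨rfl, (hF _).1⟩
  -- step 0 → 1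
  have h01 := (hF (tk 0)).2
  rw [hfs 0, e0] at h01
  obtain ⟨m1, hm1, hFt1⟩ := hstep (F (tk 0)).1 0 _ h01
  rw [hval 0 h0k] at hm1
  rw [hfs 0] at hFt1
  -- step 1 → 2
  have h12 := (hF (tk 1)).2
  rw [hfs 1, ← hFt1] at h12
  obtain ⟨m2, hm2, hFt2⟩ := hstep (gid m1 (tk 1).1) 1 _ h12
  rw [hval 1 h1k] at hm2
  rw [hfs 1] at hFt2
  -- step 2 → 3
  have h23 := (hF (tk 2)).2
  rw [hfs 2, ← hFt2] at h23
  obtain ⟨j, hj, hFt3⟩ := hstep (gid m2 (tk 2).1) 2 _ h23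
  rw [hval 2 h2k] at hj
  rw [hfs 2] at hFt3
  -- the chain
  have main : ∀ s : ℕ, 3 ≤ s → s ≤ k → F (tk s) = G j (tk s) := by
    intro s
    induction s with
    | zero => intro h3 _; exact absurd h3 (by norm_num)
    | succ n ih =>
      intro h3 hsk
      rcases Nat.lt_or_ge n 3 with hn | hn
      · have hn2 : n = 2 := by omega
        subst hn2
        exact hFt3.symm
      · have hnk : n < k := by omega
        have ihn := ih hn (by omega)
        have h2 := (hF (tk n)).2
        rw [hfs n, ihn] at h2
        obtain ⟨x, hx, hGx⟩ := hstep (gid j (tk n).1) n _ h2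
        rw [hval n hnk] at hx
        rw [gid_big j hn, plist_big j hn] at hx
        rw [List.mem_singleton] at hx
        subst hx
        rw [hfs n] at hGx
        exact hGx.symm
  have hw : F (tk 0) = G j (tk 0) := by
    have hmm := main k (by omega) le_rfl
    have hkk : tk k = tk 0 := Fin.ext (by show k % k = 0 % k; simp [Nat.mod_self, Nat.zero_mod])
    rwa [hkk] at hmm
  have hi : (F (tk 0)).1 = gid j 0 := by
    rw [hw]
    show gid j ((tk 0).1) = gid j 0
    rw [hval 0 h0k]
  rw [hi] at hm1
  have hkey := (by decide : ∀ (j' x y : Fin 5), x ∈ plist (gid j' 0) 0 →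
    y ∈ plist (gid x 1) 1 → j' ∈ plist (gid y 2) 2 →
    gid j' 1 = gid x 1 ∧ gid j' 2 = gid y 2) j m1 m2 hm1 hm2 hj
  refine ⟨j, funext fun t => ?_⟩
  by_cases ht0 : t.1 = 0
  · have htt : t = tk 0 := Fin.ext (ht0.trans (hval 0 h0k).symm)
    rw [htt]; exact hw
  · by_cases ht1 : t.1 = 1
    · have htt : t = tk 1 := Fin.ext (ht1.trans (hval 1 h1k).symm)
      rw [htt, ← hFt1]
      refine Prod.ext_iff.2 ⟨?_, rfl⟩
      show gid m1 ((tk 1).1) = gid j ((tk 1).1)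
      rw [hval 1 h1k]
      exact hkey.1.symm
    · by_cases ht2 : t.1 = 2
      · have htt : t = tk 2 := Fin.ext (ht2.trans (hval 2 h2k).symm)
        rw [htt, ← hFt2]
        refine Prod.ext_iff.2 ⟨?_, rfl⟩
        show gid m2 ((tk 2).1) = gid j ((tk 2).1)
        rw [hval 2 h2k]
        exact hkey.2.symm
      · have h3t : 3 ≤ t.1 := by omega
        have hmn := main t.1 h3t (Nat.le_of_lt t.2)
        have htt : tk t.1 = t := Fin.ext (Nat.mod_eq_of_lt t.2)
        rw [htt] at hmn
        exact hmn

lemma partner_G {k : ℕ} {μ : Set (Fin k → Agent (Fin 5) k)}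
    (hm : IsMatching (Pk (k := k)) μ) {m : Fin 5} (hmem : G m ∈ μ) (t : Fin k) :
    partner μ (G m t) = G m (fsucc t) := by
  have hex : ∃ F ∈ μ, F ((G m t).2) = G m t := ⟨G m, hmem, rfl⟩
  unfold partner
  rw [dif_pos hex]
  obtain ⟨hmem', hpt⟩ := hex.choose_spec
  have hchoose : hex.choose = G m := hm.2 _ hmem' _ hmem t hpt
  rw [hchoose]
  rfl

lemma prefers_unmatched {k : ℕ} (hk : 3 ≤ k) {μ : Set (Fin k → Agent (Fin 5) k)}
    (hcl : ∀ F ∈ μ, ∃ m : Fin 5, F = G m) (b : Fin 5) (t : Fin k)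
    (h : ∀ m : Fin 5, gid m t.1 = gid b t.1 → G (k := k) m ∉ μ) :
    Prefers Pk (G b t) (G b (fsucc t)) (partner μ (G b t)) := by
  have hnex : ¬ ∃ F ∈ μ, F ((G (k := k) b t).2) = G b t := by
    rintro ⟨F, hF, hFt⟩
    obtain ⟨m, rfl⟩ := hcl F hF
    exact h m (congrArg Prod.fst hFt) hF
  have hp : partner μ (G b t) = G b t := dif_neg hnex
  rw [hp]
  exact ⟨(Gfam hk b t).2, Or.inl (self_not_mem hk _)⟩

lemma prefers_matched' {k : ℕ} (hk : 3 ≤ k) {μ : Set (Fin k → Agent (Fin 5) k)}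
    (hm : IsMatching (Pk (k := k)) μ) (b m : Fin 5) (t : Fin k) (hmem : G m ∈ μ)
    (hshare : gid m t.1 = gid b t.1)
    (hpl : plist (gid b t.1) t.1 = [b, m])
    (hne : gid b (fsucc t).1 ≠ gid m (fsucc t).1) :
    Prefers Pk (G b t) (G b (fsucc t)) (partner μ (G b t)) := by
  have hbt : G (k := k) b t = G m t := Prod.ext_iff.2 ⟨hshare.symm, rfl⟩
  have hlist : Pk (G (k := k) b t) = [G b (fsucc t), G m (fsucc t)] := by
    show (plist (gid b t.1) t.1).map (fun x => G x (fsucc t)) = _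
    rw [hpl]
    rfl
  have hne' : G (k := k) b (fsucc t) ≠ G m (fsucc t) := fun he => hne (congrArg Prod.fst he)
  have hp : partner μ (G b t) = G m (fsucc t) := by
    rw [hbt]; exact partner_G hm hmem t
  refine ⟨?_, Or.inr ?_⟩
  · simp [hlist]
  · rw [hp, hlist]
    have h1 : (G (k := k) b (fsucc t) == G (k := k) b (fsucc t)) = true := beq_self_eq_true _
    have h2 : (G (k := k) b (fsucc t) == G m (fsucc t)) = false := beq_eq_false_iff_ne.2 hne'
    simp [List.idxOf, List.findIdx_cons, h1, h2]

lemma hne23 {k : ℕ} (hk : 3 ≤ k) (t : Fin k) (e2 : t.1 = 2) :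
    gid 2 (fsucc t).1 ≠ gid 0 (fsucc t).1 := by
  have hv : (fsucc t).1 = 3 % k := by
    show (t.1 + 1) % k = 3 % k
    rw [e2]
  rw [hv]
  rcases eq_or_lt_of_le hk with hk3 | hk3
  · rw [← hk3]; decide
  · rw [Nat.mod_eq_of_lt hk3]; decide

/-- For every `k ≥ 3` there exists a `k`-DSMI-CYC instance (preference
lists may be incomplete) with no weakly stable matching. -/
theorem exists_kdsmicyc_without_weakly_stable_matching (k : ℕ) (hk : 3 ≤ k) :
    ∃ (n : ℕ) (P : Prefs (Fin n) k), ValidPrefs P ∧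
      ∀ μ : Set (Fin k → Agent (Fin n) k), ¬ WeaklyStable P μ := by
  refine ⟨5, Pk, validK hk, ?_⟩
  rintro μ ⟨hm, hstable⟩
  have hcl : ∀ F ∈ μ, ∃ m : Fin 5, F = G m := fun F hF => classifyK hk F (hm.1 F hF)
  have huniq : ∀ x y : Fin 5, G (k := k) x ∈ μ → G y ∈ μ → (∃ t : Fin k, G x t = G y t) →
      x = y := by
    rintro x y hx hy ⟨t, ht⟩
    have hxy : G (k := k) x = G y := hm.2 _ hx _ hy t ht
    have e0 : gid x 0 = gid y 0 := congrArg Prod.fst (congrFun hxy ⟨0, by omega⟩)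
    have e1 : gid x 1 = gid y 1 := congrArg Prod.fst (congrFun hxy ⟨1, by omega⟩)
    exact (by decide : ∀ x' y' : Fin 5, gid x' 0 = gid y' 0 → gid x' 1 = gid y' 1 →
      x' = y') x y e0 e1
  have hedge : ∀ x y : Fin 5, x ≠ y → ∀ s : ℕ, s < k → gid x s = gid y s →
      G (k := k) x ∈ μ → G y ∈ μ → False := by
    intro x y hxy s hs hg hx hy
    exact hxy (huniq x y hx hy ⟨⟨s, hs⟩, Prod.ext_iff.2 ⟨hg, rfl⟩⟩)
  by_cases h0 : G (k:=k) (0 : Fin 5) ∈ μ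
  · by_cases h1 : G (k:=k) (1 : Fin 5) ∈ μ
    · by_cases h2 : G (k:=k) (2 : Fin 5) ∈ μ
      · exact hedge 0 2 (by decide) 2 (by omega) (by decide) h0 h2
      · by_cases h3 : G (k:=k) (3 : Fin 5) ∈ μ
        · exact hedge 0 3 (by decide) 1 (by omega) (by decide) h0 h3
        · by_cases h4 : G (k:=k) (4 : Fin 5) ∈ μ
          · exact hedge 1 4 (by decide) 1 (by omega) (by decide) h1 h4
          · refine hstable (G (k:=k) (4 : Fin 5)) ⟨Gfam hk 4, fun t => ?_⟩
            by_cases e0 : t.1 = 0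
            · apply prefers_unmatched hk hcl
              intro m hg
              rw [e0] at hg
              rcases (by decide : ∀ x : Fin 5, gid x 0 = gid 4 0 → x = 4 ∨ x = 3) m hg with rfl | rfl
              · exact h4
              · exact h3
            · by_cases e1 : t.1 = 1
              · exact prefers_matched' hk hm 4 1 t h1 (by rw [e1]; decide)
                  (by rw [e1]; decide) (by
                    have hv : (fsucc t).1 = 2 := by
                      show (t.1+1)%k = 2
                      rw [e1]
                      exact Nat.mod_eq_of_lt (by omega)
                    rw [hv]; decide)
              · by_cases e2 : t.1 = 2
                · apply prefers_unmatched hk hcl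
                  intro m hg
                  rw [e2] at hg
                  rcases (by decide : ∀ x : Fin 5, gid x 2 = gid 4 2 → x = 4 ∨ x = 4) m hg with rfl | rfl
                  · exact h4
                  · exact h4
                · apply prefers_unmatched hk hcl
                  intro m hg
                  have h3t : 3 ≤ t.1 := by omega
                  rw [gid_big m h3t, gid_big 4 h3t] at hg
                  subst hg
                  exact h4
    · by_cases h2 : G (k:=k) (2 : Fin 5) ∈ μ
      · exact hedge 0 2 (by decide) 2 (by omega) (by decide) h0 h2
      · by_cases h3 : G (k:=k) (3 : Fin 5) ∈ μ
        · exact hedge 0 3 (by decide) 1 (by omega) (by decide) h0 h3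
        · by_cases h4 : G (k:=k) (4 : Fin 5) ∈ μ
          · refine hstable (G (k:=k) (2 : Fin 5)) ⟨Gfam hk 2, fun t => ?_⟩
            by_cases e0 : t.1 = 0
            · apply prefers_unmatched hk hcl
              intro m hg
              rw [e0] at hg
              rcases (by decide : ∀ x : Fin 5, gid x 0 = gid 2 0 → x = 2 ∨ x = 1) m hg with rfl | rfl
              · exact h2
              · exact h1
            · by_cases e1 : t.1 = 1
              · apply prefers_unmatched hk hcl
                intro m hg
                rw [e1] at hg
                rcases (by decide : ∀ x : Fin 5, gid x 1 = gid 2 1 → x = 2 ∨ x = 2) m hg with rfl | rfl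
                · exact h2
                · exact h2
              · by_cases e2 : t.1 = 2
                · exact prefers_matched' hk hm 2 0 t h0 (by rw [e2]; decide)
                    (by rw [e2]; decide) (hne23 hk t e2)
                · apply prefers_unmatched hk hcl
                  intro m hg
                  have h3t : 3 ≤ t.1 := by omega
                  rw [gid_big m h3t, gid_big 2 h3t] at hg
                  subst hg
                  exact h2
          · refine hstable (G (k:=k) (1 : Fin 5)) ⟨Gfam hk 1, fun t => ?_⟩
            by_cases e0 : t.1 = 0
            · apply prefers_unmatched hk hcl
              intro m hg
              rw [e0] at hg
              rcases (by decide : ∀ x : Fin 5, gid x 0 = gid 1 0 → x = 1 ∨ x = 2) m hg with rfl | rfl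
              · exact h1
              · exact h2
            · by_cases e1 : t.1 = 1
              · apply prefers_unmatched hk hcl
                intro m hg
                rw [e1] at hg
                rcases (by decide : ∀ x : Fin 5, gid x 1 = gid 1 1 → x = 1 ∨ x = 4) m hg with rfl | rfl
                · exact h1
                · exact h4
              · by_cases e2 : t.1 = 2
                · apply prefers_unmatched hk hcl
                  intro m hg
                  rw [e2] at hg
                  rcases (by decide : ∀ x : Fin 5, gid x 2 = gid 1 2 → x = 1 ∨ x = 1) m hg with rfl | rfl
                  · exact h1
                  · exact h1
                · apply prefers_unmatched hk hcl
                  intro m hg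
                  have h3t : 3 ≤ t.1 := by omega
                  rw [gid_big m h3t, gid_big 1 h3t] at hg
                  subst hg
                  exact h1
  · by_cases h1 : G (k:=k) (1 : Fin 5) ∈ μ
    · by_cases h2 : G (k:=k) (2 : Fin 5) ∈ μ
      · exact hedge 1 2 (by decide) 0 (by omega) (by decide) h1 h2
      · by_cases h3 : G (k:=k) (3 : Fin 5) ∈ μ
        · by_cases h4 : G (k:=k) (4 : Fin 5) ∈ μ
          · exact hedge 1 4 (by decide) 1 (by omega) (by decide) h1 h4
          · refine hstable (G (k:=k) (0 : Fin 5)) ⟨Gfam hk 0, fun t => ?_⟩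
            by_cases e0 : t.1 = 0
            · apply prefers_unmatched hk hcl
              intro m hg
              rw [e0] at hg
              rcases (by decide : ∀ x : Fin 5, gid x 0 = gid 0 0 → x = 0 ∨ x = 0) m hg with rfl | rfl
              · exact h0
              · exact h0
            · by_cases e1 : t.1 = 1
              · exact prefers_matched' hk hm 0 3 t h3 (by rw [e1]; decide)
                  (by rw [e1]; decide) (by
                    have hv : (fsucc t).1 = 2 := by
                      show (t.1+1)%k = 2
                      rw [e1]
                      exact Nat.mod_eq_of_lt (by omega)
                    rw [hv]; decide)
              · by_cases e2 : t.1 = 2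
                · apply prefers_unmatched hk hcl
                  intro m hg
                  rw [e2] at hg
                  rcases (by decide : ∀ x : Fin 5, gid x 2 = gid 0 2 → x = 0 ∨ x = 2) m hg with rfl | rfl
                  · exact h0
                  · exact h2
                · apply prefers_unmatched hk hcl
                  intro m hg
                  have h3t : 3 ≤ t.1 := by omega
                  rw [gid_big m h3t, gid_big 0 h3t] at hg
                  subst hg
                  exact h0
        · by_cases h4 : G (k:=k) (4 : Fin 5) ∈ μ
          · exact hedge 1 4 (by decide) 1 (by omega) (by decide) h1 h4
          · refine hstable (G (k:=k) (0 : Fin 5)) ⟨Gfam hk 0, fun t => ?_⟩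
            by_cases e0 : t.1 = 0
            · apply prefers_unmatched hk hcl
              intro m hg
              rw [e0] at hg
              rcases (by decide : ∀ x : Fin 5, gid x 0 = gid 0 0 → x = 0 ∨ x = 0) m hg with rfl | rfl
              · exact h0
              · exact h0
            · by_cases e1 : t.1 = 1
              · apply prefers_unmatched hk hcl
                intro m hg
                rw [e1] at hg
                rcases (by decide : ∀ x : Fin 5, gid x 1 = gid 0 1 → x = 0 ∨ x = 3) m hg with rfl | rfl
                · exact h0
                · exact h3
              · by_cases e2 : t.1 = 2
                · apply prefers_unmatched hk hcl
                  intro m hg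
                  rw [e2] at hg
                  rcases (by decide : ∀ x : Fin 5, gid x 2 = gid 0 2 → x = 0 ∨ x = 2) m hg with rfl | rfl
                  · exact h0
                  · exact h2
                · apply prefers_unmatched hk hcl
                  intro m hg
                  have h3t : 3 ≤ t.1 := by omega
                  rw [gid_big m h3t, gid_big 0 h3t] at hg
                  subst hg
                  exact h0
    · by_cases h2 : G (k:=k) (2 : Fin 5) ∈ μ
      · by_cases h3 : G (k:=k) (3 : Fin 5) ∈ μ
        · by_cases h4 : G (k:=k) (4 : Fin 5) ∈ μ
          · exact hedge 3 4 (by decide) 0 (by omega) (by decide) h3 h4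
          · refine hstable (G (k:=k) (1 : Fin 5)) ⟨Gfam hk 1, fun t => ?_⟩
            by_cases e0 : t.1 = 0
            · exact prefers_matched' hk hm 1 2 t h2 (by rw [e0]; decide)
                (by rw [e0]; decide) (by
                  have hv : (fsucc t).1 = 1 := by
                    show (t.1+1)%k = 1
                    rw [e0]
                    exact Nat.mod_eq_of_lt (by omega)
                  rw [hv]; decide)
            · by_cases e1 : t.1 = 1
              · apply prefers_unmatched hk hcl
                intro m hg
                rw [e1] at hg
                rcases (by decide : ∀ x : Fin 5, gid x 1 = gid 1 1 → x = 1 ∨ x = 4) m hg with rfl | rfl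
                · exact h1
                · exact h4
              · by_cases e2 : t.1 = 2
                · apply prefers_unmatched hk hcl
                  intro m hg
                  rw [e2] at hg
                  rcases (by decide : ∀ x : Fin 5, gid x 2 = gid 1 2 → x = 1 ∨ x = 1) m hg with rfl | rfl
                  · exact h1
                  · exact h1
                · apply prefers_unmatched hk hcl
                  intro m hg
                  have h3t : 3 ≤ t.1 := by omega
                  rw [gid_big m h3t, gid_big 1 h3t] at hg
                  subst hg
                  exact h1
        · by_cases h4 : G (k:=k) (4 : Fin 5) ∈ μ
          · refine hstable (G (k:=k) (3 : Fin 5)) ⟨Gfam hk 3, fun t => ?_⟩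
            by_cases e0 : t.1 = 0
            · exact prefers_matched' hk hm 3 4 t h4 (by rw [e0]; decide)
                (by rw [e0]; decide) (by
                  have hv : (fsucc t).1 = 1 := by
                    show (t.1+1)%k = 1
                    rw [e0]
                    exact Nat.mod_eq_of_lt (by omega)
                  rw [hv]; decide)
            · by_cases e1 : t.1 = 1
              · apply prefers_unmatched hk hcl
                intro m hg
                rw [e1] at hg
                rcases (by decide : ∀ x : Fin 5, gid x 1 = gid 3 1 → x = 3 ∨ x = 0) m hg with rfl | rfl
                · exact h3
                · exact h0
              · by_cases e2 : t.1 = 2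
                · apply prefers_unmatched hk hcl
                  intro m hg
                  rw [e2] at hg
                  rcases (by decide : ∀ x : Fin 5, gid x 2 = gid 3 2 → x = 3 ∨ x = 3) m hg with rfl | rfl
                  · exact h3
                  · exact h3
                · apply prefers_unmatched hk hcl
                  intro m hg
                  have h3t : 3 ≤ t.1 := by omega
                  rw [gid_big m h3t, gid_big 3 h3t] at hg
                  subst hg
                  exact h3
          · refine hstable (G (k:=k) (1 : Fin 5)) ⟨Gfam hk 1, fun t => ?_⟩
            by_cases e0 : t.1 = 0
            · exact prefers_matched' hk hm 1 2 t h2 (by rw [e0]; decide)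
                (by rw [e0]; decide) (by
                  have hv : (fsucc t).1 = 1 := by
                    show (t.1+1)%k = 1
                    rw [e0]
                    exact Nat.mod_eq_of_lt (by omega)
                  rw [hv]; decide)
            · by_cases e1 : t.1 = 1
              · apply prefers_unmatched hk hcl
                intro m hg
                rw [e1] at hg
                rcases (by decide : ∀ x : Fin 5, gid x 1 = gid 1 1 → x = 1 ∨ x = 4) m hg with rfl | rfl
                · exact h1
                · exact h4
              · by_cases e2 : t.1 = 2
                · apply prefers_unmatched hk hcl
                  intro m hg
                  rw [e2] at hg
                  rcases (by decide : ∀ x : Fin 5, gid x 2 = gid 1 2 → x = 1 ∨ x = 1) m hg with rfl | rfl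
                  · exact h1
                  · exact h1
                · apply prefers_unmatched hk hcl
                  intro m hg
                  have h3t : 3 ≤ t.1 := by omega
                  rw [gid_big m h3t, gid_big 1 h3t] at hg
                  subst hg
                  exact h1
      · by_cases h3 : G (k:=k) (3 : Fin 5) ∈ μ
        · by_cases h4 : G (k:=k) (4 : Fin 5) ∈ μ
          · exact hedge 3 4 (by decide) 0 (by omega) (by decide) h3 h4
          · refine hstable (G (k:=k) (0 : Fin 5)) ⟨Gfam hk 0, fun t => ?_⟩
            by_cases e0 : t.1 = 0
            · apply prefers_unmatched hk hcl
              intro m hg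
              rw [e0] at hg
              rcases (by decide : ∀ x : Fin 5, gid x 0 = gid 0 0 → x = 0 ∨ x = 0) m hg with rfl | rfl
              · exact h0
              · exact h0
            · by_cases e1 : t.1 = 1
              · exact prefers_matched' hk hm 0 3 t h3 (by rw [e1]; decide)
                  (by rw [e1]; decide) (by
                    have hv : (fsucc t).1 = 2 := by
                      show (t.1+1)%k = 2
                      rw [e1]
                      exact Nat.mod_eq_of_lt (by omega)
                    rw [hv]; decide)
              · by_cases e2 : t.1 = 2
                · apply prefers_unmatched hk hcl
                  intro m hg
                  rw [e2] at hg
                  rcases (by decide : ∀ x : Fin 5, gid x 2 = gid 0 2 → x = 0 ∨ x = 2) m hg with rfl | rfl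
                  · exact h0
                  · exact h2
                · apply prefers_unmatched hk hcl
                  intro m hg
                  have h3t : 3 ≤ t.1 := by omega
                  rw [gid_big m h3t, gid_big 0 h3t] at hg
                  subst hg
                  exact h0
        · by_cases h4 : G (k:=k) (4 : Fin 5) ∈ μ
          · refine hstable (G (k:=k) (0 : Fin 5)) ⟨Gfam hk 0, fun t => ?_⟩
            by_cases e0 : t.1 = 0
            · apply prefers_unmatched hk hcl
              intro m hg
              rw [e0] at hg
              rcases (by decide : ∀ x : Fin 5, gid x 0 = gid 0 0 → x = 0 ∨ x = 0) m hg with rfl | rfl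
              · exact h0
              · exact h0
            · by_cases e1 : t.1 = 1
              · apply prefers_unmatched hk hcl
                intro m hg
                rw [e1] at hg
                rcases (by decide : ∀ x : Fin 5, gid x 1 = gid 0 1 → x = 0 ∨ x = 3) m hg with rfl | rfl
                · exact h0
                · exact h3
              · by_cases e2 : t.1 = 2
                · apply prefers_unmatched hk hcl
                  intro m hg
                  rw [e2] at hg
                  rcases (by decide : ∀ x : Fin 5, gid x 2 = gid 0 2 → x = 0 ∨ x = 2) m hg with rfl | rfl
                  · exact h0
                  · exact h2
                · apply prefers_unmatched hk hcl
                  intro m hg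
                  have h3t : 3 ≤ t.1 := by omega
                  rw [gid_big m h3t, gid_big 0 h3t] at hg
                  subst hg
                  exact h0
          · refine hstable (G (k:=k) (0 : Fin 5)) ⟨Gfam hk 0, fun t => ?_⟩
            by_cases e0 : t.1 = 0
            · apply prefers_unmatched hk hcl
              intro m hg
              rw [e0] at hg
              rcases (by decide : ∀ x : Fin 5, gid x 0 = gid 0 0 → x = 0 ∨ x = 0) m hg with rfl | rfl
              · exact h0
              · exact h0
            · by_cases e1 : t.1 = 1
              · apply prefers_unmatched hk hcl
                intro m hg
                rw [e1] at hg
                rcases (by decide : ∀ x : Fin 5, gid x 1 = gid 0 1 → x = 0 ∨ x = 3) m hg with rfl | rfl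
                · exact h0
                · exact h3
              · by_cases e2 : t.1 = 2
                · apply prefers_unmatched hk hcl
                  intro m hg
                  rw [e2] at hg
                  rcases (by decide : ∀ x : Fin 5, gid x 2 = gid 0 2 → x = 0 ∨ x = 2) m hg with rfl | rfl
                  · exact h0
                  · exact h2
                · apply prefers_unmatched hk hcl
                  intro m hg
                  have h3t : 3 ≤ t.1 := by omega
                  rw [gid_big m h3t, gid_big 0 h3t] at hg
                  subst hg
                  exact h0
end

section
/- Every family of the k-DSMI-CYC instance X̂ produced by the dimension-lifting reduction has the form ((i₀,i₀,0), (i₁,i₁,1), (i₂,i₂,2), (i₂,i₀,3), (i₂,i₀,4), …, (i₂,i₀,k−1)) where (i₀,i₁,i₂) ranges over the families of the input 3-DSMI-CYC instance X; moreover every tuple of this form with (i₀,i₁,i₂) a family of X is a family of X̂, so this correspondence is a bijection between the families of X̂ and the families of X. -/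
open Classical

/-- The dimension-lifting reduction from a 3-DSMI-CYC instance `P` over identifiers `ι`
to a `k`-DSMI-CYC instance over identifiers `ι × ι` (`k ≥ 4`).  An agent is written
`((i, j), t)`.  Non-dummy agents are those of the form `((i, i), t)` with `t ∈ {0,1,2}`. -/
def liftP {ι : Type} [DecidableEq ι] (k : ℕ) (hk : 4 ≤ k) (P : Prefs ι 3) :
    Prefs (ι × ι) k := fun b =>
  if ht : b.2.1 < 3 then
    if b.1.1 = b.1.2 then
      if b.2.1 = 2 then
        -- type 2 non-dummy: entries `(i, j', 3)` for `(j', 0)` in `P (i, 2)`, in order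
        (P (b.1.1, (2 : Fin 3))).map fun c => ((b.1.1, c.1), fsucc b.2)
      else
        -- type 0 or 1 non-dummy: entries `(i', i', t+1)` for `(i', t+1)` in `P (i, t)`
        (P (b.1.1, (⟨b.2.1, ht⟩ : Fin 3))).map fun c => ((c.1, c.1), fsucc b.2)
    else []
  else
    if (b.1.2, (0 : Fin 3)) ∈ P (b.1.1, (2 : Fin 3)) then
      if b.2.1 = k - 1 then [((b.1.2, b.1.2), fsucc b.2)]
      else [((b.1.1, b.1.2), fsucc b.2)]
    else []

/-- The family of the lifted instance corresponding to a family `(i₀,i₁,i₂)` of the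
3-dimensional instance: `((i₀,i₀,0), (i₁,i₁,1), (i₂,i₂,2), (i₂,i₀,3), …, (i₂,i₀,k−1))`. -/
def liftFam {ι : Type} (k : ℕ) (G : Fin 3 → Agent ι 3) : Fin k → Agent (ι × ι) k :=
  fun t =>
    if h : t.1 < 3 then (((G ⟨t.1, h⟩).1, (G ⟨t.1, h⟩).1), t)
    else (((G (2 : Fin 3)).1, (G (0 : Fin 3)).1), t)


section LiftHelpers

variable {ι : Type} [DecidableEq ι] {k : ℕ}

lemma fsucc_mk_of_lt (t : Fin k) (h : t.1 + 1 < k) : fsucc t = ⟨t.1 + 1, h⟩ :=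
  Fin.ext (Nat.mod_eq_of_lt h)

lemma fsucc_mk_last (t : Fin k) (h : t.1 = k - 1) : fsucc t = ⟨0, t.pos⟩ := by
  apply Fin.ext
  have hk : 0 < k := t.pos
  simp only [fsucc, h]
  rw [show k - 1 + 1 = k by omega, Nat.mod_self]

lemma mem_liftP_iff01 (hk : 4 ≤ k) (P : Prefs ι 3) (i j : ι) (t : Fin k) (s : Fin 3)
    (hs : t.1 = s.1) (ht2 : s.1 ≠ 2) (c : Agent (ι × ι) k) :
    c ∈ liftP k hk P ((i, j), t) ↔
      i = j ∧ ∃ d ∈ P (i, s), c = ((d.1, d.1), fsucc t) := by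
  have ht : t.1 < 3 := by rw [hs]; exact s.isLt
  have ht2' : ¬ t.1 = 2 := by rw [hs]; exact ht2
  have hmk : (⟨t.1, ht⟩ : Fin 3) = s := Fin.ext hs
  simp only [liftP]
  rw [dif_pos ht]
  by_cases hij : i = j
  · rw [if_pos hij, if_neg ht2', hmk]
    simp [hij, List.mem_map, eq_comm]
  · rw [if_neg hij]
    simp [hij]

lemma mem_liftP_iff2 (hk : 4 ≤ k) (P : Prefs ι 3) (i j : ι) (t : Fin k)
    (ht : t.1 = 2) (c : Agent (ι × ι) k) :
    c ∈ liftP k hk P ((i, j), t) ↔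
      i = j ∧ ∃ d ∈ P (i, (2 : Fin 3)), c = ((i, d.1), fsucc t) := by
  simp only [liftP]
  rw [dif_pos (show t.1 < 3 by omega)]
  by_cases hij : i = j
  · rw [if_pos hij, if_pos ht]
    simp [hij, List.mem_map, eq_comm]
  · rw [if_neg hij]
    simp [hij]

lemma mem_liftP_iff_mid (hk : 4 ≤ k) (P : Prefs ι 3) (i j : ι) (t : Fin k)
    (ht : 3 ≤ t.1) (ht2 : t.1 ≠ k - 1) (c : Agent (ι × ι) k) :
    c ∈ liftP k hk P ((i, j), t) ↔
      (j, (0 : Fin 3)) ∈ P (i, (2 : Fin 3)) ∧ c = ((i, j), fsucc t) := by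
  simp only [liftP]
  rw [dif_neg (show ¬ t.1 < 3 by omega)]
  by_cases hm : (j, (0 : Fin 3)) ∈ P (i, (2 : Fin 3))
  · rw [if_pos hm, if_neg ht2]
    simp [hm]
  · rw [if_neg hm]
    simp [hm]

lemma mem_liftP_iff_last (hk : 4 ≤ k) (P : Prefs ι 3) (i j : ι) (t : Fin k)
    (ht : t.1 = k - 1) (c : Agent (ι × ι) k) :
    c ∈ liftP k hk P ((i, j), t) ↔
      (j, (0 : Fin 3)) ∈ P (i, (2 : Fin 3)) ∧ c = ((j, j), fsucc t) := by
  simp only [liftP]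
  rw [dif_neg (show ¬ t.1 < 3 by omega)]
  by_cases hm : (j, (0 : Fin 3)) ∈ P (i, (2 : Fin 3))
  · rw [if_pos hm, if_pos ht]
    simp [hm]
  · rw [if_neg hm]
    simp [hm]

end LiftHelpers

section MoreHelpers

variable {ι : Type}

lemma liftFam_lt (k : ℕ) (G : Fin 3 → Agent ι 3) (t : Fin k) (h : t.1 < 3) :
    liftFam k G t = (((G ⟨t.1, h⟩).1, (G ⟨t.1, h⟩).1), t) := by
  simp only [liftFam]; rw [dif_pos h]

lemma liftFam_ge (k : ℕ) (G : Fin 3 → Agent ι 3) (t : Fin k) (h : ¬ t.1 < 3) :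
    liftFam k G t = (((G (2 : Fin 3)).1, (G (0 : Fin 3)).1), t) := by
  simp only [liftFam]; rw [dif_neg h]

end MoreHelpers

theorem lift_families {ι : Type} [DecidableEq ι] (k : ℕ) (hk : 4 ≤ k) (P : Prefs ι 3)
    (hP : ValidPrefs P) :
    (∀ F : Fin k → Agent (ι × ι) k,
        IsFamily (liftP k hk P) F ↔ ∃ G : Fin 3 → Agent ι 3, IsFamily P G ∧ F = liftFam k G) ∧
    (∀ G G' : Fin 3 → Agent ι 3, IsFamily P G → IsFamily P G' →
        liftFam k G = liftFam k G' → G = G') := by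
  obtain ⟨-, hval⟩ := hP
  have h0k : 0 < k := by omega
  have h1k : 1 < k := by omega
  have h2k : 2 < k := by omega
  have h3k : 3 < k := by omega
  have hf0 : fsucc (0 : Fin 3) = 1 := by decide
  have hf1 : fsucc (1 : Fin 3) = 2 := by decide
  have hf2 : fsucc (2 : Fin 3) = 0 := by decide
  have hs01 : fsucc (⟨0, h0k⟩ : Fin k) = ⟨1, h1k⟩ := fsucc_mk_of_lt _ h1k
  have hs12 : fsucc (⟨1, h1k⟩ : Fin k) = ⟨2, h2k⟩ := fsucc_mk_of_lt _ h2k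
  have hs23 : fsucc (⟨2, h2k⟩ : Fin k) = ⟨3, h3k⟩ := fsucc_mk_of_lt _ h3k
  constructor
  · intro F
    constructor
    · -- forward direction
      intro hF
      have hsnd : ∀ t : Fin k, (F t).2 = t := fun t => (hF t).1
      rcases e0' : F ⟨0, h0k⟩ with ⟨⟨a0, b0⟩, c0⟩
      have hc0 : c0 = ⟨0, h0k⟩ := by
        have h := hsnd ⟨0, h0k⟩; rw [e0'] at h; exact h
      subst hc0
      -- step at type 0
      have step0 := (hF ⟨0, h0k⟩).2
      rw [e0', hs01] at step0
      obtain ⟨hab0, d1, hd1m, hd1e⟩ :=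
        (mem_liftP_iff01 hk P a0 b0 ⟨0, h0k⟩ 0 rfl (by decide) _).1 step0
      rw [← hab0] at e0'
      rw [hs01] at hd1e
      have hd1t : d1.2 = 1 := by rw [hval _ _ hd1m]; exact hf0
      -- step at type 1
      have step1 := (hF ⟨1, h1k⟩).2
      rw [hd1e, hs12] at step1
      obtain ⟨-, d2, hd2m, hd2e⟩ :=
        (mem_liftP_iff01 hk P d1.1 d1.1 ⟨1, h1k⟩ 1 rfl (by decide) _).1 step1
      rw [hs12] at hd2e
      have hd2t : d2.2 = 2 := by rw [hval _ _ hd2m]; exact hf1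
      -- step at type 2
      have step2 := (hF ⟨2, h2k⟩).2
      rw [hd2e, hs23] at step2
      obtain ⟨-, d3, hd3m, hd3e⟩ :=
        (mem_liftP_iff2 hk P d2.1 d2.1 ⟨2, h2k⟩ rfl _).1 step2
      rw [hs23] at hd3e
      have hd3t : d3.2 = 0 := by rw [hval _ _ hd3m]; exact hf2
      -- dummy steps
      have key : ∀ n, 3 ≤ n → ∀ hn : n < k, F ⟨n, hn⟩ = ((d2.1, d3.1), ⟨n, hn⟩) := by
        intro n
        induction n with
        | zero => intro h; omega
        | succ m ih =>
          intro h3 hn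
          by_cases hm3 : m < 3
          · have hm : m = 2 := by omega
            subst hm
            exact hd3e
          · have hmk : m < k := by omega
            have ihm := ih (by omega) hmk
            have step := (hF ⟨m, hmk⟩).2
            rw [ihm, show fsucc (⟨m, hmk⟩ : Fin k) = ⟨m + 1, hn⟩ from fsucc_mk_of_lt _ hn]
              at step
            obtain ⟨-, heq⟩ :=
              (mem_liftP_iff_mid hk P _ _ ⟨m, hmk⟩ (show 3 ≤ m by omega)
                (show m ≠ k - 1 by omega) _).1 step
            rw [show fsucc (⟨m, hmk⟩ : Fin k) = ⟨m + 1, hn⟩ from fsucc_mk_of_lt _ hn] at heq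
            exact heq
      -- wrap-around: j = a0
      have hkm : k - 1 < k := by omega
      have stepl := (hF ⟨k - 1, hkm⟩).2
      rw [key (k - 1) (by omega) hkm,
        show fsucc (⟨k - 1, hkm⟩ : Fin k) = ⟨0, h0k⟩ from fsucc_mk_last _ rfl] at stepl
      obtain ⟨-, h00⟩ := (mem_liftP_iff_last hk P _ _ ⟨k - 1, hkm⟩ rfl _).1 stepl
      rw [show fsucc (⟨k - 1, hkm⟩ : Fin k) = ⟨0, h0k⟩ from fsucc_mk_last _ rfl] at h00
      have hja : a0 = d3.1 := congrArg (fun p => p.1.1) (e0'.symm.trans h00)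
      -- membership facts in clean form
      have hm01 : ((d1.1, (1 : Fin 3)) : Agent ι 3) ∈ P (a0, 0) := by
        rw [show ((d1.1, (1 : Fin 3)) : Agent ι 3) = d1 from by rw [← hd1t]]
        exact hd1m
      have hm12 : ((d2.1, (2 : Fin 3)) : Agent ι 3) ∈ P (d1.1, 1) := by
        rw [show ((d2.1, (2 : Fin 3)) : Agent ι 3) = d2 from by rw [← hd2t]]
        exact hd2m
      have hm20 : ((a0, (0 : Fin 3)) : Agent ι 3) ∈ P (d2.1, 2) := by
        rw [hja, show ((d3.1, (0 : Fin 3)) : Agent ι 3) = d3 from by rw [← hd3t]]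
        exact hd3m
      refine ⟨fun s => ((if s.1 = 0 then a0 else if s.1 = 1 then d1.1 else d2.1), s), ?_, ?_⟩
      · intro s
        refine ⟨rfl, ?_⟩
        rcases s with ⟨sv, hsv⟩
        interval_cases sv
        · exact hm01
        · exact hm12
        · rw [show fsucc (⟨2, by norm_num⟩ : Fin 3) = 0 from Fin.ext (by simp [fsucc])]
          exact hm20
      · funext t
        rcases t with ⟨tv, htv⟩
        by_cases h : tv < 3
        · rcases (by omega : tv = 0 ∨ tv = 1 ∨ tv = 2) with h0 | h1 | h2
          · subst h0
            rw [liftFam_lt k _ ⟨0, htv⟩ (show (0:ℕ) < 3 by norm_num)]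
            exact e0'
          · subst h1
            rw [liftFam_lt k _ ⟨1, htv⟩ (show (1:ℕ) < 3 by norm_num)]
            exact hd1e
          · subst h2
            rw [liftFam_lt k _ ⟨2, htv⟩ (show (2:ℕ) < 3 by norm_num)]
            exact hd2e
        · rw [liftFam_ge k _ ⟨tv, htv⟩ h]
          show F ⟨tv, htv⟩ = ((d2.1, a0), ⟨tv, htv⟩)
          rw [hja]
          exact key tv (by omega) htv
    · -- backward direction
      rintro ⟨G, hG, rfl⟩
      have eG : ∀ s : Fin 3, G s = ((G s).1, s) := by
        intro s
        have h := (hG s).1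
        exact Prod.ext rfl h
      have hm0 : G 1 ∈ P (G 0) := by have h := (hG 0).2; rwa [hf0] at h
      have hm1 : G 2 ∈ P (G 1) := by have h := (hG 1).2; rwa [hf1] at h
      have hm2 : G 0 ∈ P (G 2) := by have h := (hG 2).2; rwa [hf2] at h
      have hm0' : G 1 ∈ P ((G 0).1, 0) := by rw [← eG 0]; exact hm0
      have hm1' : G 2 ∈ P ((G 1).1, 1) := by rw [← eG 1]; exact hm1
      have hm2' : G 0 ∈ P ((G 2).1, 2) := by rw [← eG 2]; exact hm2
      intro t
      refine ⟨?_, ?_⟩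
      · by_cases h : t.1 < 3
        · rw [liftFam_lt k G t h]
        · rw [liftFam_ge k G t h]
      · rcases t with ⟨tv, htv⟩
        rcases (by omega : tv = 0 ∨ tv = 1 ∨ tv = 2 ∨ (3 ≤ tv ∧ tv ≠ k - 1) ∨ tv = k - 1)
          with h | h | h | ⟨h, h'⟩ | h
        · subst h
          rw [show fsucc (⟨0, htv⟩ : Fin k) = ⟨1, h1k⟩ from fsucc_mk_of_lt _ h1k,
            liftFam_lt k G ⟨1, h1k⟩ (show (1:ℕ) < 3 by norm_num),
            liftFam_lt k G ⟨0, htv⟩ (show (0:ℕ) < 3 by norm_num)]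
          refine (mem_liftP_iff01 hk P _ _ ⟨0, htv⟩ 0 rfl (by decide) _).2 ⟨rfl, G 1, hm0', ?_⟩
          rw [show fsucc (⟨0, htv⟩ : Fin k) = ⟨1, h1k⟩ from fsucc_mk_of_lt _ h1k]
          rfl
        · subst h
          rw [show fsucc (⟨1, htv⟩ : Fin k) = ⟨2, h2k⟩ from fsucc_mk_of_lt _ h2k,
            liftFam_lt k G ⟨2, h2k⟩ (show (2:ℕ) < 3 by norm_num),
            liftFam_lt k G ⟨1, htv⟩ (show (1:ℕ) < 3 by norm_num)]
          refine (mem_liftP_iff01 hk P _ _ ⟨1, htv⟩ 1 rfl (by decide) _).2 ⟨rfl, G 2, hm1', ?_⟩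
          rw [show fsucc (⟨1, htv⟩ : Fin k) = ⟨2, h2k⟩ from fsucc_mk_of_lt _ h2k]
          rfl
        · subst h
          rw [show fsucc (⟨2, htv⟩ : Fin k) = ⟨3, h3k⟩ from fsucc_mk_of_lt _ h3k,
            liftFam_ge k G ⟨3, h3k⟩ (show ¬ (3:ℕ) < 3 by norm_num),
            liftFam_lt k G ⟨2, htv⟩ (show (2:ℕ) < 3 by norm_num)]
          refine (mem_liftP_iff2 hk P _ _ ⟨2, htv⟩ rfl _).2 ⟨rfl, G 0, hm2', ?_⟩
          rw [show fsucc (⟨2, htv⟩ : Fin k) = ⟨3, h3k⟩ from fsucc_mk_of_lt _ h3k]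
          rfl
        · have htv1 : tv + 1 < k := by omega
          rw [show fsucc (⟨tv, htv⟩ : Fin k) = ⟨tv + 1, htv1⟩ from fsucc_mk_of_lt _ htv1,
            liftFam_ge k G ⟨tv + 1, htv1⟩ (show ¬ tv + 1 < 3 by omega),
            liftFam_ge k G ⟨tv, htv⟩ (show ¬ tv < 3 by omega)]
          refine (mem_liftP_iff_mid hk P _ _ ⟨tv, htv⟩ (show 3 ≤ tv from h)
            (show tv ≠ k - 1 from h') _).2 ⟨?_, ?_⟩
          · rw [← eG 0]; exact hm2'
          · rw [show fsucc (⟨tv, htv⟩ : Fin k) = ⟨tv + 1, htv1⟩ from fsucc_mk_of_lt _ htv1]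
        · subst h
          rw [show fsucc (⟨k - 1, htv⟩ : Fin k) = ⟨0, h0k⟩ from fsucc_mk_last _ rfl,
            liftFam_lt k G ⟨0, h0k⟩ (show (0:ℕ) < 3 by norm_num),
            liftFam_ge k G ⟨k - 1, htv⟩ (show ¬ k - 1 < 3 by omega)]
          refine (mem_liftP_iff_last hk P _ _ ⟨k - 1, htv⟩ rfl _).2 ⟨?_, ?_⟩
          · rw [← eG 0]; exact hm2'
          · rw [show fsucc (⟨k - 1, htv⟩ : Fin k) = ⟨0, h0k⟩ from fsucc_mk_last _ rfl]
            rfl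
  · intro G G' hG hG' hEq
    funext s
    have hsk : s.1 < k := lt_of_lt_of_le s.isLt (by omega)
    have h := congrFun hEq ⟨s.1, hsk⟩
    rw [liftFam_lt k G ⟨s.1, hsk⟩ s.isLt, liftFam_lt k G' ⟨s.1, hsk⟩ s.isLt] at h
    have hfst : (G s).1 = (G' s).1 := congrArg (fun p => p.1.1) h
    exact Prod.ext hfst ((hG s).1.trans ((hG' s).1).symm)
end

section
/- Under the bijection between families of X̂ and families of X given by the dimension-lifting reduction (and the induced bijection between matchings of X̂ and matchings of X), a family of X̂ strongly blocks a matching μ̂ of X̂ if and only if the corresponding family of X strongly blocks the corresponding matching μ of X; consequently μ̂ is weakly stable if and only if μ is weakly stable. -/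
open Classical

section LiftAux

lemma indexOf_map_injOn {γ δ : Type} [DecidableEq γ] [DecidableEq δ] {m k : ℕ}
    (f : Agent γ m → Agent δ k) : ∀ (l : List (Agent γ m)), (∀ x ∈ l, ∀ y ∈ l, f x = f y → x = y) →
      ∀ a ∈ l, (l.map f).idxOf (f a) = l.idxOf a := by
  intro l
  induction l with
  | nil => intro _ a ha; simp at ha
  | cons x xs ih =>
    intro hinj a ha
    by_cases hxa : x = a
    · subst hxa
      rw [List.map_cons, List.idxOf_cons, List.idxOf_cons]
      simp
    · have hfa : f x ≠ f a := fun h => hxa (hinj x (by simp) a ha h)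
      have ha' : a ∈ xs := by
        rcases List.mem_cons.1 ha with h | h
        · exact absurd h.symm hxa
        · exact h
      have e1 : (f x == f a) = false := by simpa using hfa
      have e2 : (x == a) = false := by simpa using hxa
      rw [List.map_cons, List.idxOf_cons, List.idxOf_cons, e1, e2]
      simp only [cond_false]
      rw [ih (fun u hu v hv => hinj u (List.mem_cons_of_mem _ hu) v (List.mem_cons_of_mem _ hv))
          a ha']

lemma partner_matched {ι : Type} {k : ℕ} {P : Prefs ι k} {μ : Set (Fin k → Agent ι k)}
    (hμ : IsMatching P μ) {F : Fin k → Agent ι k} (hF : F ∈ μ) {a : Agent ι k}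
    (ha : F a.2 = a) : partner μ a = F (fsucc a.2) := by
  have hex : ∃ F ∈ μ, F a.2 = a := ⟨F, hF, ha⟩
  rw [partner, dif_pos hex]
  obtain ⟨h1, h2⟩ := hex.choose_spec
  rw [hμ.2 _ h1 _ hF a.2 (h2.trans ha.symm)]

lemma partner_unmatched {ι : Type} {k : ℕ} {μ : Set (Fin k → Agent ι k)} {a : Agent ι k}
    (h : ¬ ∃ F ∈ μ, F a.2 = a) : partner μ a = a := dif_neg h

lemma prefers_map_iff {γ δ : Type} [DecidableEq γ] [DecidableEq δ] {m k : ℕ}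
    (f : Agent γ m → Agent δ k) (l : List (Agent γ m))
    (b c : Agent γ m) (d : Agent δ k)
    (hl : ∀ x ∈ l, ∀ y ∈ l, f x = f y → x = y)
    (hb : ∀ y ∈ l, f y = f b → y = b)
    (hd : (d = f c ∧ ∀ y ∈ l, f y = f c → y = c) ∨ (d ∉ l.map f ∧ c ∉ l)) :
    (f b ∈ l.map f ∧ (d ∉ l.map f ∨ (l.map f).idxOf (f b) < (l.map f).idxOf d)) ↔
      (b ∈ l ∧ (c ∉ l ∨ l.idxOf b < l.idxOf c)) := by
  have hmemb : f b ∈ l.map f ↔ b ∈ l := by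
    constructor
    · intro h; obtain ⟨y, hy, hfy⟩ := List.mem_map.1 h; exact (hb y hy hfy) ▸ hy
    · exact fun h => List.mem_map_of_mem h
  rcases hd with ⟨hdc, hc⟩ | ⟨hd1, hd2⟩
  · subst hdc
    have hmemc : f c ∈ l.map f ↔ c ∈ l := by
      constructor
      · intro h; obtain ⟨y, hy, hfy⟩ := List.mem_map.1 h; exact (hc y hy hfy) ▸ hy
      · exact fun h => List.mem_map_of_mem h
    by_cases hcl : c ∈ l
    · have h1 : (l.map f).idxOf (f c) = l.idxOf c := indexOf_map_injOn f l hl c hcl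
      constructor
      · rintro ⟨h2, h3⟩
        refine ⟨hmemb.1 h2, ?_⟩
        rcases h3 with h3 | h3
        · exact absurd (hmemc.2 hcl) h3
        · right
          rwa [indexOf_map_injOn f l hl b (hmemb.1 h2), h1] at h3
      · rintro ⟨h2, h3⟩
        refine ⟨hmemb.2 h2, ?_⟩
        rcases h3 with h3 | h3
        · exact absurd hcl h3
        · right; rwa [indexOf_map_injOn f l hl b h2, h1]
    · simp [hmemb, hmemc, hcl]
  · simp [hmemb, hd1, hd2]

end LiftAux
section LiftComp

variable {ι : Type} [DecidableEq ι] {k : ℕ} (hk : 4 ≤ k) (P : Prefs ι 3)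

lemma liftP_lo (i : ι) (t : Fin k) (ht : t.1 < 3) (ht2 : t.1 ≠ 2) :
    liftP k hk P ((i, i), t) = (P (i, ⟨t.1, ht⟩)).map fun c => ((c.1, c.1), fsucc t) := by
  simp [liftP, ht, ht2]

lemma liftP_two (i : ι) (t : Fin k) (ht : t.1 = 2) :
    liftP k hk P ((i, i), t) = (P (i, 2)).map fun c => ((i, c.1), fsucc t) := by
  have ht3 : t.1 < 3 := by omega
  simp [liftP, ht3, ht]

lemma liftP_dummy (i j : ι) (t : Fin k) (ht : t.1 < 3) (hij : i ≠ j) :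
    liftP k hk P ((i, j), t) = [] := by
  simp [liftP, ht, hij]

lemma liftP_mid (i j : ι) (t : Fin k) (ht : ¬ t.1 < 3) (htk : t.1 ≠ k - 1)
    (hmem : (j, (0 : Fin 3)) ∈ P (i, 2)) :
    liftP k hk P ((i, j), t) = [((i, j), fsucc t)] := by
  simp [liftP, ht, htk, hmem]

lemma liftP_last (i j : ι) (t : Fin k) (ht : ¬ t.1 < 3) (htk : t.1 = k - 1)
    (hmem : (j, (0 : Fin 3)) ∈ P (i, 2)) :
    liftP k hk P ((i, j), t) = [((j, j), fsucc t)] := by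
  rw [liftP]
  simp only []
  rw [dif_neg ht, if_pos hmem, if_pos htk]

lemma liftP_hi_empty (i j : ι) (t : Fin k) (ht : ¬ t.1 < 3)
    (hmem : (j, (0 : Fin 3)) ∉ P (i, 2)) :
    liftP k hk P ((i, j), t) = [] := by
  simp [liftP, ht, hmem]

lemma liftP_snd {b c : Agent (ι × ι) k} (hc : c ∈ liftP k hk P b) : c.2 = fsucc b.2 := by
  unfold liftP at hc
  split at hc
  · split at hc
    · split at hc
      · obtain ⟨x, -, hx⟩ := List.mem_map.1 hc; rw [← hx]
      · obtain ⟨x, -, hx⟩ := List.mem_map.1 hc; rw [← hx]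
    · simp at hc
  · split at hc
    · split at hc
      · simp at hc; rw [hc]
      · simp at hc; rw [hc]
    · simp at hc

lemma liftFam_snd (G : Fin 3 → Agent ι 3) (t : Fin k) : (liftFam k G t).2 = t := by
  unfold liftFam; split <;> rfl

lemma liftFam_lo (G : Fin 3 → Agent ι 3) (t : Fin k) (ht : t.1 < 3) :
    liftFam k G t = (((G ⟨t.1, ht⟩).1, (G ⟨t.1, ht⟩).1), t) := dif_pos ht

lemma liftFam_hi (G : Fin 3 → Agent ι 3) (t : Fin k) (ht : ¬ t.1 < 3) :
    liftFam k G t = (((G 2).1, (G 0).1), t) := dif_neg ht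

lemma fsucc_val {t : Fin k} (h : t.1 + 1 < k) : fsucc t = ⟨t.1 + 1, h⟩ := by
  apply Fin.ext
  simp [fsucc, Nat.mod_eq_of_lt h]

lemma fsucc_last {t : Fin k} (h : t.1 = k - 1) : fsucc t = ⟨0, by omega⟩ := by
  apply Fin.ext
  have h1 : t.1 + 1 = k := by omega
  simp [fsucc, h1]

lemma fin3_cases (s : Fin 3) : s = 0 ∨ s = 1 ∨ s = 2 := by omega

lemma fsucc3_0 : fsucc (0 : Fin 3) = 1 := by decide
lemma fsucc3_1 : fsucc (1 : Fin 3) = 2 := by decide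
lemma fsucc3_2 : fsucc (2 : Fin 3) = 0 := by decide

end LiftComp
section LiftFamily

variable {ι : Type} [DecidableEq ι] {k : ℕ} (hk : 4 ≤ k) (P : Prefs ι 3)

lemma fin3_mk0 (h : (0:ℕ) < 3) : (⟨0, h⟩ : Fin 3) = 0 := rfl
lemma fin3_mk1 (h : (1:ℕ) < 3) : (⟨1, h⟩ : Fin 3) = 1 := rfl
lemma fin3_mk2 (h : (2:ℕ) < 3) : (⟨2, h⟩ : Fin 3) = 2 := rfl

lemma liftFam_family (hP : ValidPrefs P) {G : Fin 3 → Agent ι 3} (hG : IsFamily P G) :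
    IsFamily (liftP k hk P) (liftFam k G) := by
  have e0 : G 0 = ((G 0).1, 0) := Prod.ext rfl (hG 0).1
  have e2 : G 2 = ((G 2).1, 2) := Prod.ext rfl (hG 2).1
  have hG01 : G 1 ∈ P (G 0) := by have h := (hG 0).2; rwa [fsucc3_0] at h
  have hG12 : G 2 ∈ P (G 1) := by have h := (hG 1).2; rwa [fsucc3_1] at h
  have hG20 : G 0 ∈ P (G 2) := by have h := (hG 2).2; rwa [fsucc3_2] at h
  have hmem20 : ((G 0).1, (0 : Fin 3)) ∈ P ((G 2).1, 2) := by rw [← e0, ← e2]; exact hG20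
  rintro ⟨tv, htv⟩
  refine ⟨liftFam_snd G _, ?_⟩
  rcases Nat.lt_or_ge tv 3 with h3 | h3
  · interval_cases tv
    · -- tv = 0
      have hs : fsucc (⟨0, htv⟩ : Fin k) = ⟨1, by omega⟩ := fsucc_val (by simp only [Fin.val_mk]; omega)
      rw [hs, liftFam_lo G _ (by omega : (0:ℕ) < 3), liftFam_lo G _ (by omega : (1:ℕ) < 3),
        liftP_lo hk P _ _ (by simp only [Fin.val_mk]; omega) (by simp only [Fin.val_mk]; omega), fin3_mk0, fin3_mk1, ← hs]
      rw [← e0]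
      exact List.mem_map_of_mem hG01
    · -- tv = 1
      have hs : fsucc (⟨1, htv⟩ : Fin k) = ⟨2, by omega⟩ := fsucc_val (by simp only [Fin.val_mk]; omega)
      rw [hs, liftFam_lo G _ (by omega : (1:ℕ) < 3), liftFam_lo G _ (by omega : (2:ℕ) < 3),
        liftP_lo hk P _ _ (by simp only [Fin.val_mk]; omega) (by simp only [Fin.val_mk]; omega), fin3_mk1, fin3_mk2, ← hs]
      rw [← (Prod.ext rfl (hG 1).1 : G 1 = ((G 1).1, 1))]
      exact List.mem_map_of_mem hG12
    · -- tv = 2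
      have hs : fsucc (⟨2, htv⟩ : Fin k) = ⟨3, by omega⟩ := fsucc_val (by simp only [Fin.val_mk]; omega)
      rw [hs, liftFam_lo G _ (by omega : (2:ℕ) < 3), liftFam_hi G _ (by simp only [Fin.val_mk]; omega),
        liftP_two hk P _ _ rfl, fin3_mk2, ← hs]
      rw [← e2]
      exact List.mem_map_of_mem (f := fun c : Agent ι 3 => (((G 2).1, c.1), fsucc (⟨2, htv⟩ : Fin k))) hG20
  · rcases Nat.lt_or_ge tv (k - 1) with hklt | hkge
    · -- 3 ≤ tv < k - 1
      have hs : fsucc (⟨tv, htv⟩ : Fin k) = ⟨tv + 1, by omega⟩ := fsucc_val (by simp only [Fin.val_mk]; omega)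
      rw [hs, liftFam_hi G _ (by simp only [Fin.val_mk]; omega), liftFam_hi G _ (by simp only [Fin.val_mk]; omega),
        liftP_mid hk P _ _ _ (by simp only [Fin.val_mk]; omega) (by simp only [Fin.val_mk]; omega) hmem20, ← hs]
      simp
    · -- tv = k - 1
      have hkl : tv = k - 1 := by omega
      have hs : fsucc (⟨tv, htv⟩ : Fin k) = ⟨0, by omega⟩ := fsucc_last hk (t := ⟨tv, htv⟩) hkl
      rw [hs, liftFam_hi G _ (by simp only [Fin.val_mk]; omega), liftFam_lo G _ (by omega : (0:ℕ) < 3), fin3_mk0,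
        liftP_last hk P _ _ _ (by simp only [Fin.val_mk]; omega) hkl hmem20, ← hs]
      simp

end LiftFamily
section LiftStruct

variable {ι : Type} [DecidableEq ι] {k : ℕ} (hk : 4 ≤ k) (P : Prefs ι 3)

lemma liftFam_eq_lo {G H : Fin 3 → Agent ι 3} (hG2 : ∀ s, (G s).2 = s)
    (hH2 : ∀ s, (H s).2 = s) {t : Fin k} (ht : t.1 < 3)
    (h : liftFam k G t = liftFam k H t) : G ⟨t.1, ht⟩ = H ⟨t.1, ht⟩ := by
  rw [liftFam_lo G t ht, liftFam_lo H t ht] at h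
  have h1 : (G ⟨t.1, ht⟩).1 = (H ⟨t.1, ht⟩).1 := congrArg (fun p => p.1.1) h
  exact Prod.ext h1 ((hG2 _).trans (hH2 _).symm)

lemma lift_matching (hP : ValidPrefs P) {μ : Set (Fin 3 → Agent ι 3)}
    (hμ : IsMatching P μ) : IsMatching (liftP k hk P) (liftFam k '' μ) := by
  constructor
  · rintro F ⟨H, hH, rfl⟩
    exact liftFam_family hk P hP (hμ.1 H hH)
  · rintro F ⟨H, hH, rfl⟩ F' ⟨H', hH', rfl⟩ t h
    have hHf := hμ.1 H hH
    have hH'f := hμ.1 H' hH'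
    have : H = H' := by
      rcases Nat.lt_or_ge t.1 3 with h3 | h3
      · exact hμ.2 H hH H' hH' _
          (liftFam_eq_lo (fun s => (hHf s).1) (fun s => (hH'f s).1) h3 h)
      · rw [liftFam_hi H t (by omega), liftFam_hi H' t (by omega)] at h
        have h1 : (H 2).1 = (H' 2).1 := congrArg (fun p => p.1.1) h
        exact hμ.2 H hH H' hH' 2 (Prod.ext h1 ((hHf 2).1.trans ((hH'f 2).1).symm))
    rw [this]

lemma fam_structure (hP : ValidPrefs P) {F : Fin k → Agent (ι × ι) k}
    (hF : IsFamily (liftP k hk P) F) :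
    ∃ G : Fin 3 → Agent ι 3, IsFamily P G ∧ F = liftFam k G := by
  have ht0 : (0:ℕ) < k := by omega
  have ht1 : (1:ℕ) < k := by omega
  have ht2 : (2:ℕ) < k := by omega
  have ht3 : (3:ℕ) < k := by omega
  set t0 : Fin k := ⟨0, ht0⟩ with ht0d
  set t1 : Fin k := ⟨1, ht1⟩ with ht1d
  set t2 : Fin k := ⟨2, ht2⟩ with ht2d
  set t3 : Fin k := ⟨3, ht3⟩ with ht3d
  have hs0 : fsucc t0 = t1 := fsucc_val (by show 0 + 1 < k; omega)
  have hs1 : fsucc t1 = t2 := fsucc_val (by show 1 + 1 < k; omega)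
  have hs2 : fsucc t2 = t3 := fsucc_val (by show 2 + 1 < k; omega)
  -- step 0
  obtain ⟨h02, h0m⟩ := hF t0
  have et0 : F t0 = (((F t0).1.1, (F t0).1.2), t0) := Prod.ext (Prod.ext rfl rfl) h02
  have hij0 : (F t0).1.1 = (F t0).1.2 := by
    by_contra hne
    rw [et0, liftP_dummy hk P _ _ t0 (by show 0 < 3; omega) hne] at h0m
    exact absurd h0m List.not_mem_nil
  set i0 := (F t0).1.1 with hi0
  have et0' : F t0 = ((i0, i0), t0) := by rw [et0, ← hij0]
  rw [et0', liftP_lo hk P i0 t0 (by show 0 < 3; omega)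
    (by show 0 ≠ 2; omega), hs0] at h0m
  obtain ⟨c1, hc1P, hc1e⟩ := List.mem_map.1 h0m
  have hc1P' : c1 ∈ P (i0, 0) := by rwa [fin3_mk0] at hc1P
  set i1 := c1.1 with hi1
  have et1 : F t1 = ((i1, i1), t1) := hc1e.symm
  have hc1ty : c1.2 = 1 := hP.2 (i0, 0) c1 hc1P'
  have hc1 : c1 = (i1, 1) := Prod.ext rfl hc1ty
  -- step 1
  obtain ⟨h12, h1m⟩ := hF t1
  rw [et1, liftP_lo hk P i1 t1 (by show 1 < 3; omega)
    (by show 1 ≠ 2; omega), hs1] at h1m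
  obtain ⟨c2, hc2P, hc2e⟩ := List.mem_map.1 h1m
  have hc2P' : c2 ∈ P (i1, 1) := by rwa [fin3_mk1] at hc2P
  set i2 := c2.1 with hi2
  have et2 : F t2 = ((i2, i2), t2) := hc2e.symm
  have hc2ty : c2.2 = 2 := by
    have := hP.2 (i1, 1) c2 hc2P'
    rwa [show fsucc ((1:Fin 3)) = 2 from fsucc3_1] at this
  have hc2 : c2 = (i2, 2) := Prod.ext rfl hc2ty
  -- step 2
  obtain ⟨h22, h2m⟩ := hF t2
  rw [et2, liftP_two hk P i2 t2 rfl, hs2] at h2m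
  obtain ⟨c3, hc3P, hc3e⟩ := List.mem_map.1 h2m
  set j0 := c3.1 with hj0
  have et3 : F t3 = ((i2, j0), t3) := hc3e.symm
  have hc3ty : c3.2 = 0 := by
    have := hP.2 (i2, 2) c3 hc3P
    rwa [show fsucc ((2:Fin 3)) = 0 from fsucc3_2] at this
  have hc3 : c3 = (j0, 0) := Prod.ext rfl hc3ty
  have hj0P : (j0, (0:Fin 3)) ∈ P (i2, 2) := hc3 ▸ hc3P
  -- induction for 3 ≤ m < k
  have claim : ∀ m, 3 ≤ m → ∀ (hmk : m < k), F ⟨m, hmk⟩ = ((i2, j0), ⟨m, hmk⟩) := by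
    intro m hm
    induction m, hm using Nat.le_induction with
    | base => intro hmk; exact et3
    | succ m hm ih =>
      intro hmk
      have hmk' : m < k := by omega
      obtain ⟨-, hmm⟩ := hF ⟨m, hmk'⟩
      rw [ih hmk', liftP_mid hk P i2 j0 ⟨m, hmk'⟩ (by simp only [Fin.val_mk]; omega)
        (by simp only [Fin.val_mk]; omega) hj0P,
        fsucc_val (t := (⟨m, hmk'⟩ : Fin k)) (by simp only [Fin.val_mk]; omega)] at hmm
      exact List.mem_singleton.1 hmm
  -- last step: j0 = i0
  have hkm1 : k - 1 < k := by omega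
  obtain ⟨-, hlm⟩ := hF ⟨k - 1, hkm1⟩
  rw [claim (k-1) (by omega) hkm1, liftP_last hk P i2 j0 ⟨k - 1, hkm1⟩
    (by simp only [Fin.val_mk]; omega) rfl hj0P,
    fsucc_last hk (t := (⟨k - 1, hkm1⟩ : Fin k)) rfl] at hlm
  have hlm' : F t0 = ((j0, j0), t0) := List.mem_singleton.1 hlm
  have hji : j0 = i0 := by
    have := hlm'.symm.trans et0'
    exact congrArg (fun p => p.1.1) this
  -- assemble G
  refine ⟨![(i0, 0), (i1, 1), (i2, 2)], ?_, ?_⟩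
  · intro s
    fin_cases s
    · exact ⟨rfl, by simpa [fsucc3_0, hc1] using hc1P'⟩
    · exact ⟨rfl, by simpa [fsucc3_1, hc2] using hc2P'⟩
    · refine ⟨rfl, ?_⟩
      show (![(i0, 0), (i1, 1), (i2, 2)] : Fin 3 → Agent ι 3) (fsucc 2) ∈ P (i2, 2)
      rw [fsucc3_2]
      show ((i0, 0) : Agent ι 3) ∈ P (i2, 2)
      rwa [← hji]
  · funext t
    rcases Nat.lt_or_ge t.1 3 with h3 | h3
    · rw [liftFam_lo _ t h3]
      rcases t with ⟨tv, htv⟩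
      simp only [Fin.val_mk] at h3
      interval_cases tv
      · simpa using et0'
      · simpa using et1
      · simpa using et2
    · rw [liftFam_hi _ t (by omega)]
      rcases t with ⟨tv, htv⟩
      simp only [Fin.val_mk] at h3
      have := claim tv h3 htv
      rw [this]
      simp [hji]

end LiftStruct
section LiftPrefers

variable {ι : Type} [DecidableEq ι] {k : ℕ} (hk : 4 ≤ k) (P : Prefs ι 3)

include hk in
lemma lift_partner_lo (hP : ValidPrefs P) {μ : Set (Fin 3 → Agent ι 3)} (hμ : IsMatching P μ)
    {G H : Fin 3 → Agent ι 3} {t : Fin k} (ht : t.1 < 3) (hH : H ∈ μ)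
    (hmatch : H ⟨t.1, ht⟩ = G ⟨t.1, ht⟩) :
    partner (liftFam k '' μ) (liftFam k G t) = liftFam k H (fsucc t) := by
  have h := partner_matched (lift_matching hk P hP hμ)
    (show liftFam k H ∈ liftFam k '' μ from ⟨H, hH, rfl⟩) (a := liftFam k G t)
    (by rw [liftFam_snd G t, liftFam_lo H t ht, liftFam_lo G t ht, hmatch])
  rwa [liftFam_snd G t] at h

include hk in
lemma lift_unmatched_lo (hP : ValidPrefs P) {μ : Set (Fin 3 → Agent ι 3)} (hμ : IsMatching P μ)
    {G : Fin 3 → Agent ι 3} (hGty : ∀ s, (G s).2 = s) {t : Fin k} (ht : t.1 < 3)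
    (hun : ¬ ∃ H ∈ μ, H ⟨t.1, ht⟩ = G ⟨t.1, ht⟩) :
    partner (liftFam k '' μ) (liftFam k G t) = liftFam k G t := by
  refine partner_unmatched ?_
  rintro ⟨F, ⟨H, hH, rfl⟩, hFe⟩
  rw [liftFam_snd G t] at hFe
  exact hun ⟨H, hH, liftFam_eq_lo (fun s => ((hμ.1 H hH) s).1) hGty ht hFe⟩

lemma lift_unmatched_hi {μ : Set (Fin 3 → Agent ι 3)}
    {G : Fin 3 → Agent ι 3} {t : Fin k} (ht : ¬ t.1 < 3)
    (hun : ¬ ∃ H ∈ μ, (H 2).1 = (G 2).1 ∧ (H 0).1 = (G 0).1) :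
    partner (liftFam k '' μ) (liftFam k G t) = liftFam k G t := by
  refine partner_unmatched ?_
  rintro ⟨F, ⟨H, hH, rfl⟩, hFe⟩
  rw [liftFam_snd G t, liftFam_hi H t ht, liftFam_hi G t ht] at hFe
  exact hun ⟨H, hH, congrArg (fun p => p.1.1) hFe, congrArg (fun p => p.1.2) hFe⟩

lemma prefers_lo_iff (hP : ValidPrefs P) {μ : Set (Fin 3 → Agent ι 3)} (hμ : IsMatching P μ)
    {G : Fin 3 → Agent ι 3} (hG : IsFamily P G) {t : Fin k} (ht : t.1 < 3) (ht2 : t.1 ≠ 2)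
    (hst : t.1 + 1 < k) (hs3 : t.1 + 1 < 3) :
    (Prefers (liftP k hk P) (liftFam k G t) (liftFam k G (fsucc t))
        (partner (liftFam k '' μ) (liftFam k G t)) ↔
      Prefers P (G ⟨t.1, ht⟩) (G (fsucc ⟨t.1, ht⟩)) (partner μ (G ⟨t.1, ht⟩))) := by
  have hfs3 : fsucc (⟨t.1, ht⟩ : Fin 3) = ⟨t.1 + 1, hs3⟩ :=
    fsucc_val (by simp only [Fin.val_mk]; omega)
  have hfst : fsucc t = ⟨t.1 + 1, hst⟩ := fsucc_val hst
  have es : G ⟨t.1, ht⟩ = ((G ⟨t.1, ht⟩).1, (⟨t.1, ht⟩ : Fin 3)) :=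
    Prod.ext rfl (hG ⟨t.1, ht⟩).1
  have hlist : liftP k hk P (liftFam k G t) =
      (P (G ⟨t.1, ht⟩)).map (fun c => ((c.1, c.1), fsucc t)) := by
    rw [liftFam_lo G t ht, liftP_lo hk P _ t ht ht2, ← es]
  have hbe : liftFam k G (fsucc t) =
      ((fun c => ((c.1, c.1), fsucc t)) (G (fsucc ⟨t.1, ht⟩))) := by
    rw [hfst, liftFam_lo G _ (by simp only [Fin.val_mk]; omega), hfs3]
  have hl : ∀ x ∈ P (G ⟨t.1, ht⟩), ∀ y ∈ P (G ⟨t.1, ht⟩),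
      (fun c => ((c.1, c.1), fsucc t)) x = (fun c => ((c.1, c.1), fsucc t)) y → x = y := by
    intro x hx y hy hxy
    have h1 : x.1 = y.1 := congrArg (fun p => p.1.1) hxy
    exact Prod.ext h1 ((hP.2 _ x hx).trans (hP.2 _ y hy).symm)
  have htype : ∀ y ∈ P (G ⟨t.1, ht⟩), y.2 = fsucc (⟨t.1, ht⟩ : Fin 3) := by
    intro y hy
    have h := hP.2 _ y hy
    rwa [(hG ⟨t.1, ht⟩).1] at h
  have hb : ∀ y ∈ P (G ⟨t.1, ht⟩),
      (fun c => ((c.1, c.1), fsucc t)) y = (fun c => ((c.1, c.1), fsucc t)) (G (fsucc ⟨t.1, ht⟩))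
      → y = G (fsucc ⟨t.1, ht⟩) := by
    intro y hy hxy
    have h1 : y.1 = (G (fsucc ⟨t.1, ht⟩)).1 := congrArg (fun p => p.1.1) hxy
    exact Prod.ext h1 ((htype y hy).trans ((hG (fsucc ⟨t.1, ht⟩)).1).symm)
  by_cases hm : ∃ H ∈ μ, H ⟨t.1, ht⟩ = G ⟨t.1, ht⟩
  · obtain ⟨H, hH, hHs⟩ := hm
    have hHfam := hμ.1 H hH
    have hpart3 : partner μ (G ⟨t.1, ht⟩) = H (fsucc ⟨t.1, ht⟩) := by
      have h := partner_matched hμ hH (a := G ⟨t.1, ht⟩) (by rw [(hG ⟨t.1, ht⟩).1]; exact hHs)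
      rwa [(hG ⟨t.1, ht⟩).1] at h
    have hpartk : partner (liftFam k '' μ) (liftFam k G t) = liftFam k H (fsucc t) :=
      lift_partner_lo hk P hP hμ ht hH hHs
    have hde : liftFam k H (fsucc t) =
        ((fun c => ((c.1, c.1), fsucc t)) (H (fsucc ⟨t.1, ht⟩))) := by
      rw [hfst, liftFam_lo H _ (by simp only [Fin.val_mk]; omega), hfs3]
    have hc : ∀ y ∈ P (G ⟨t.1, ht⟩),
        (fun c => ((c.1, c.1), fsucc t)) y
          = (fun c => ((c.1, c.1), fsucc t)) (H (fsucc ⟨t.1, ht⟩))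
        → y = H (fsucc ⟨t.1, ht⟩) := by
      intro y hy hxy
      have h1 : y.1 = (H (fsucc ⟨t.1, ht⟩)).1 := congrArg (fun p => p.1.1) hxy
      exact Prod.ext h1 ((htype y hy).trans ((hHfam (fsucc ⟨t.1, ht⟩)).1).symm)
    unfold Prefers
    rw [hlist, hbe, hpartk, hde, hpart3]
    exact prefers_map_iff _ _ _ _ _ hl hb (Or.inl ⟨rfl, hc⟩)
  · have hpart3 : partner μ (G ⟨t.1, ht⟩) = G ⟨t.1, ht⟩ := by
      refine partner_unmatched ?_
      rintro ⟨H, hH, hHe⟩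
      rw [(hG ⟨t.1, ht⟩).1] at hHe
      exact hm ⟨H, hH, hHe⟩
    have hpartk : partner (liftFam k '' μ) (liftFam k G t) = liftFam k G t :=
      lift_unmatched_lo hk P hP hμ (fun s => (hG s).1) ht hm
    have hd1 : liftFam k G t ∉ (P (G ⟨t.1, ht⟩)).map (fun c => ((c.1, c.1), fsucc t)) := by
      intro hmem
      obtain ⟨y, -, hy⟩ := List.mem_map.1 hmem
      have h2 : fsucc t = t := by
        have h3 := congrArg Prod.snd hy
        rwa [liftFam_snd G t] at h3
      rw [hfst] at h2
      have h4 := congrArg Fin.val h2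
      simp only [Fin.val_mk] at h4
      omega
    have hd2 : G ⟨t.1, ht⟩ ∉ P (G ⟨t.1, ht⟩) := by
      intro hmem
      have h2 := htype _ hmem
      rw [(hG ⟨t.1, ht⟩).1, hfs3] at h2
      have h4 := congrArg Fin.val h2
      simp only [Fin.val_mk] at h4
      omega
    unfold Prefers
    rw [hlist, hbe, hpartk, hpart3]
    exact prefers_map_iff _ _ _ _ _ hl hb (Or.inr ⟨hd1, hd2⟩)

lemma prefers_two_iff (hP : ValidPrefs P) {μ : Set (Fin 3 → Agent ι 3)} (hμ : IsMatching P μ)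
    {G : Fin 3 → Agent ι 3} (hG : IsFamily P G) {t : Fin k} (ht2 : t.1 = 2) :
    (Prefers (liftP k hk P) (liftFam k G t) (liftFam k G (fsucc t))
        (partner (liftFam k '' μ) (liftFam k G t)) ↔
      Prefers P (G 2) (G 0) (partner μ (G 2))) := by
  have ht : t.1 < 3 := by omega
  have hmk2 : (⟨t.1, ht⟩ : Fin 3) = 2 := by apply Fin.ext; simp [ht2]
  have hfst : fsucc t = ⟨t.1 + 1, by omega⟩ := fsucc_val (by omega)
  have es : G 2 = ((G 2).1, (2 : Fin 3)) := Prod.ext rfl (hG 2).1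
  have hnlt : ¬ (fsucc t).1 < 3 := by rw [hfst]; simp only [Fin.val_mk]; omega
  have hlist : liftP k hk P (liftFam k G t) =
      (P (G 2)).map (fun c => (((G 2).1, c.1), fsucc t)) := by
    rw [liftFam_lo G t ht, hmk2, liftP_two hk P _ t ht2, ← es]
  have hbe : liftFam k G (fsucc t) = ((fun c => (((G 2).1, c.1), fsucc t)) (G 0)) := by
    rw [liftFam_hi G _ hnlt]
  have hl : ∀ x ∈ P (G 2), ∀ y ∈ P (G 2),
      (fun c => (((G 2).1, c.1), fsucc t)) x = (fun c => (((G 2).1, c.1), fsucc t)) y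
      → x = y := by
    intro x hx y hy hxy
    have h1 : x.1 = y.1 := congrArg (fun p => p.1.2) hxy
    exact Prod.ext h1 ((hP.2 _ x hx).trans (hP.2 _ y hy).symm)
  have htype : ∀ y ∈ P (G 2), y.2 = (0 : Fin 3) := by
    intro y hy
    have h := hP.2 _ y hy
    rwa [(hG 2).1, fsucc3_2] at h
  have hb : ∀ y ∈ P (G 2),
      (fun c => (((G 2).1, c.1), fsucc t)) y = (fun c => (((G 2).1, c.1), fsucc t)) (G 0)
      → y = G 0 := by
    intro y hy hxy
    have h1 : y.1 = (G 0).1 := congrArg (fun p => p.1.2) hxy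
    exact Prod.ext h1 ((htype y hy).trans ((hG 0).1).symm)
  by_cases hm : ∃ H ∈ μ, H 2 = G 2
  · obtain ⟨H, hH, hHs⟩ := hm
    have hHfam := hμ.1 H hH
    have hpart3 : partner μ (G 2) = H 0 := by
      have h := partner_matched hμ hH (a := G 2) (by rw [(hG 2).1]; exact hHs)
      rwa [(hG 2).1, fsucc3_2] at h
    have hpartk : partner (liftFam k '' μ) (liftFam k G t) = liftFam k H (fsucc t) :=
      lift_partner_lo hk P hP hμ ht hH (by rw [hmk2]; exact hHs)
    have hde : liftFam k H (fsucc t) = ((fun c => (((G 2).1, c.1), fsucc t)) (H 0)) := by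
      rw [liftFam_hi H _ hnlt]
      have : (H 2).1 = (G 2).1 := congrArg Prod.fst hHs
      rw [this]
    have hc : ∀ y ∈ P (G 2),
        (fun c => (((G 2).1, c.1), fsucc t)) y = (fun c => (((G 2).1, c.1), fsucc t)) (H 0)
        → y = H 0 := by
      intro y hy hxy
      have h1 : y.1 = (H 0).1 := congrArg (fun p => p.1.2) hxy
      exact Prod.ext h1 ((htype y hy).trans ((hHfam 0).1).symm)
    unfold Prefers
    rw [hlist, hbe, hpartk, hde, hpart3]
    exact prefers_map_iff _ _ _ _ _ hl hb (Or.inl ⟨rfl, hc⟩)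
  · have hpart3 : partner μ (G 2) = G 2 := by
      refine partner_unmatched ?_
      rintro ⟨H, hH, hHe⟩
      rw [(hG 2).1] at hHe
      exact hm ⟨H, hH, hHe⟩
    have hpartk : partner (liftFam k '' μ) (liftFam k G t) = liftFam k G t :=
      lift_unmatched_lo hk P hP hμ (fun s => (hG s).1) ht
        (by rw [hmk2]; exact hm)
    have hd1 : liftFam k G t ∉ (P (G 2)).map (fun c => (((G 2).1, c.1), fsucc t)) := by
      intro hmem
      obtain ⟨y, -, hy⟩ := List.mem_map.1 hmem
      have h2 : fsucc t = t := by
        have h3 := congrArg Prod.snd hy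
        rwa [liftFam_snd G t] at h3
      rw [hfst] at h2
      have h4 := congrArg Fin.val h2
      simp only [Fin.val_mk] at h4
      omega
    have hd2 : G 2 ∉ P (G 2) := by
      intro hmem
      have h2 := htype _ hmem
      rw [(hG 2).1] at h2
      exact absurd (congrArg Fin.val h2) (by decide)
    unfold Prefers
    rw [hlist, hbe, hpartk, hpart3]
    exact prefers_map_iff _ _ _ _ _ hl hb (Or.inr ⟨hd1, hd2⟩)

end LiftPrefers
section LiftMain

variable {ι : Type} [DecidableEq ι] {k : ℕ} (hk : 4 ≤ k) (P : Prefs ι 3)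

include hk in
lemma blocks_iff (hP : ValidPrefs P) {μ : Set (Fin 3 → Agent ι 3)} (hμ : IsMatching P μ)
    {G : Fin 3 → Agent ι 3} (hG : IsFamily P G) :
    StronglyBlocks (liftP k hk P) (liftFam k '' μ) (liftFam k G) ↔ StronglyBlocks P μ G := by
  have ht0 : (0:ℕ) < k := by omega
  have ht1 : (1:ℕ) < k := by omega
  have ht2 : (2:ℕ) < k := by omega
  constructor
  · rintro ⟨-, hblk⟩
    refine ⟨hG, ?_⟩
    intro s
    rcases fin3_cases s with rfl | rfl | rfl
    · exact (prefers_lo_iff hk P hP hμ hG (t := ⟨0, ht0⟩)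
        (by simp only [Fin.val_mk]; omega) (by simp only [Fin.val_mk]; omega)
        (by simp only [Fin.val_mk]; omega) (by simp only [Fin.val_mk]; omega)).1
        (hblk ⟨0, ht0⟩)
    · exact (prefers_lo_iff hk P hP hμ hG (t := ⟨1, ht1⟩)
        (by simp only [Fin.val_mk]; omega) (by simp only [Fin.val_mk]; omega)
        (by simp only [Fin.val_mk]; omega) (by simp only [Fin.val_mk]; omega)).1
        (hblk ⟨1, ht1⟩)
    · have h := (prefers_two_iff hk P hP hμ hG (t := ⟨2, ht2⟩) rfl).1 (hblk ⟨2, ht2⟩)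
      rw [fsucc3_2]
      exact h
  · rintro ⟨-, hblk3⟩
    refine ⟨liftFam_family hk P hP hG, ?_⟩
    have hkey : ¬ ∃ H ∈ μ, (H 2).1 = (G 2).1 ∧ (H 0).1 = (G 0).1 := by
      rintro ⟨H, hH, h2, h0⟩
      have hHfam := hμ.1 H hH
      have hH2 : H 2 = G 2 := Prod.ext h2 ((hHfam 2).1.trans ((hG 2).1).symm)
      have hH0 : H 0 = G 0 := Prod.ext h0 ((hHfam 0).1.trans ((hG 0).1).symm)
      have hp : partner μ (G 2) = H 0 := by
        have h := partner_matched hμ hH (a := G 2) (by rw [(hG 2).1]; exact hH2)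
        rwa [(hG 2).1, fsucc3_2] at h
      have hpref := hblk3 2
      rw [fsucc3_2, hp, hH0] at hpref
      rcases hpref.2 with h | h
      · exact h hpref.1
      · omega
    intro t
    rcases Nat.lt_or_ge t.1 3 with h3 | h3
    · rcases t with ⟨tv, htv⟩
      simp only [Fin.val_mk] at h3
      interval_cases tv
      · exact (prefers_lo_iff hk P hP hμ hG (t := ⟨0, htv⟩)
          (by simp only [Fin.val_mk]; omega) (by simp only [Fin.val_mk]; omega)
          (by simp only [Fin.val_mk]; omega) (by simp only [Fin.val_mk]; omega)).2 (hblk3 0)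
      · exact (prefers_lo_iff hk P hP hμ hG (t := ⟨1, htv⟩)
          (by simp only [Fin.val_mk]; omega) (by simp only [Fin.val_mk]; omega)
          (by simp only [Fin.val_mk]; omega) (by simp only [Fin.val_mk]; omega)).2 (hblk3 1)
      · refine (prefers_two_iff hk P hP hμ hG (t := ⟨2, htv⟩) rfl).2 ?_
        have h := hblk3 2
        rwa [fsucc3_2] at h
    · have e2 : G 2 = ((G 2).1, 2) := Prod.ext rfl (hG 2).1
      have e0 : G 0 = ((G 0).1, 0) := Prod.ext rfl (hG 0).1
      have hG20 : G 0 ∈ P (G 2) := by have h := (hG 2).2; rwa [fsucc3_2] at h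
      have hmem20 : ((G 0).1, (0:Fin 3)) ∈ P ((G 2).1, 2) := by rw [← e0, ← e2]; exact hG20
      have hpart : partner (liftFam k '' μ) (liftFam k G t) = liftFam k G t :=
        lift_unmatched_hi (ht := by omega) hkey
      rw [hpart]
      rcases Nat.lt_or_ge t.1 (k - 1) with hlt | hge
      · have hfst : fsucc t = ⟨t.1 + 1, by omega⟩ := fsucc_val (by omega)
        have hlist : liftP k hk P (liftFam k G t) = [(((G 2).1, (G 0).1), fsucc t)] := by
          rw [liftFam_hi G t (by omega), liftP_mid hk P _ _ t (by omega) (by omega) hmem20]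
        refine ⟨?_, ?_⟩
        · rw [hlist, liftFam_hi G (fsucc t) (by rw [hfst]; simp only [Fin.val_mk]; omega)]
          exact List.mem_singleton.2 rfl
        · left
          rw [hlist]
          intro hmem
          have h2 := congrArg Prod.snd (List.mem_singleton.1 hmem)
          rw [liftFam_snd G t, hfst] at h2
          have h4 := congrArg Fin.val h2
          simp only [Fin.val_mk] at h4
          omega
      · have hkl : t.1 = k - 1 := by omega
        have hfst : fsucc t = ⟨0, by omega⟩ := fsucc_last hk hkl
        have hlist : liftP k hk P (liftFam k G t) = [(((G 0).1, (G 0).1), fsucc t)] := by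
          rw [liftFam_hi G t (by omega), liftP_last hk P _ _ t (by omega) hkl hmem20]
        refine ⟨?_, ?_⟩
        · rw [hlist, hfst, liftFam_lo G _ (by simp only [Fin.val_mk]; omega)]
          exact List.mem_singleton.2 rfl
        · left
          rw [hlist]
          intro hmem
          have h2 := congrArg Prod.snd (List.mem_singleton.1 hmem)
          rw [liftFam_snd G t, hfst] at h2
          have h4 := congrArg Fin.val h2
          simp only [Fin.val_mk] at h4
          omega

end LiftMain

/-- Under the correspondence between families/matchings of the lifted
instance and those of the original 3-dimensional instance: a (corresponding pair of)
families strongly blocks the lifted matching iff it strongly blocks the original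
matching; consequently the lifted matching is weakly stable iff the original one is. -/
theorem lift_blocking_correspondence {ι : Type} [DecidableEq ι] (k : ℕ) (hk : 4 ≤ k)
    (P : Prefs ι 3) (hP : ValidPrefs P)
    (μ : Set (Fin 3 → Agent ι 3)) (hμ : IsMatching P μ) :
    (∀ G : Fin 3 → Agent ι 3, IsFamily P G →
        (StronglyBlocks (liftP k hk P) (liftFam k '' μ) (liftFam k G) ↔
          StronglyBlocks P μ G)) ∧
    (∀ F : Fin k → Agent (ι × ι) k, StronglyBlocks (liftP k hk P) (liftFam k '' μ) F →
        ∃ G : Fin 3 → Agent ι 3, IsFamily P G ∧ F = liftFam k G) ∧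
    (WeaklyStable (liftP k hk P) (liftFam k '' μ) ↔ WeaklyStable P μ) := by
  have hbi : ∀ G : Fin 3 → Agent ι 3, IsFamily P G →
      (StronglyBlocks (liftP k hk P) (liftFam k '' μ) (liftFam k G) ↔
        StronglyBlocks P μ G) :=
    fun G hG => blocks_iff hk P hP hμ hG
  have hstr : ∀ F : Fin k → Agent (ι × ι) k,
      StronglyBlocks (liftP k hk P) (liftFam k '' μ) F →
      ∃ G : Fin 3 → Agent ι 3, IsFamily P G ∧ F = liftFam k G :=
    fun F hF => fam_structure hk P hP hF.1
  refine ⟨hbi, hstr, ?_, ?_⟩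
  · rintro ⟨-, hNB⟩
    refine ⟨hμ, ?_⟩
    intro G hGB
    exact hNB (liftFam k G) ((hbi G hGB.1).2 hGB)
  · rintro ⟨-, hNB⟩
    refine ⟨lift_matching hk P hP hμ, ?_⟩
    intro F hFB
    obtain ⟨G, hGfam, rfl⟩ := hstr F hFB
    exact hNB G ((hbi G hGfam).1 hFB)
end

section
/- Let k ≥ 3 and let X̂ be the k-DSM-CYC instance produced by the gadget reduction from a k-DSMI-CYC instance X. If X has no weakly stable matching, then X̂ has no weakly stable matching. -/
open Classical

/-- The identifier component `J = {0, …, (k−1)²}` of the gadget reduction. -/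
abbrev JId (k : ℕ) := Fin ((k - 1) ^ 2 + 1)

/-- Identifiers of the gadget instance: `J × A`, where `A` is the agent set of the
input instance (with identifiers `{0, …, n−1}`, so that agents compare
lexicographically). -/
abbrev HatId (n k : ℕ) := JId k × Agent (Fin n) k

/-- `P̂'_α`: the preference list of `α` with every entry `α'` replaced by
`(0, α', t ⊕ 1)`. -/
def hatP' {n k : ℕ} (P : Prefs (Fin n) k) (a : Agent (Fin n) k) :
    List (Agent (HatId n k) k) :=
  (P a).map fun b => (((0 : JId k), b), fsucc a.2)

/-- All agents `(j', a, t')` of the gadget of `a`, for `j' ∈ J` in increasing order. -/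
def gadgetColumn {n k : ℕ} (a : Agent (Fin n) k) (t' : Fin k) :
    List (Agent (HatId n k) k) :=
  (List.finRange ((k - 1) ^ 2 + 1)).map fun j => ((j, a), t')

/-- The agents of the input instance in increasing lexicographic order. -/
def enumA (n k : ℕ) : List (Agent (Fin n) k) :=
  (List.finRange n).flatMap fun i => (List.finRange k).map fun t => (i, t)

/-- The prescribed initial segment of the preference list of each agent of the gadget
instance: a non-dummy agent `(0, α, t)` (where `α` has type `t`) starts with `P̂'_α`
followed by its own gadget's next row; a boundary dummy agent `((k−1)², α, t)` starts
with its own gadget's next row (up to `j' < (k−1)²`) followed by all boundary agents of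
the next type in increasing lexicographic order; a non-boundary dummy agent starts with
its own gadget's next row.  The rest of each preference list is arbitrary. -/
def gadgetPrefix {n k : ℕ} (P : Prefs (Fin n) k) (b : Agent (HatId n k) k) :
    List (Agent (HatId n k) k) :=
  if b.1.1 = (0 : JId k) ∧ b.1.2.2 = b.2 then
    hatP' P b.1.2 ++ gadgetColumn b.1.2 (fsucc b.2)
  else if b.1.1 = Fin.last ((k - 1) ^ 2) then
    ((List.finRange ((k - 1) ^ 2)).map fun j => ((j.castSucc, b.1.2), fsucc b.2)) ++
      ((enumA n k).map fun a' => ((Fin.last ((k - 1) ^ 2), a'), fsucc b.2))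
  else
    gadgetColumn b.1.2 (fsucc b.2)

/-- `Phat` is a `k`-DSM-CYC instance produced by the gadget reduction from `P`:
it is valid and complete, and each preference list begins with the prescribed
initial segment. -/
def IsGadgetLift {n k : ℕ} (P : Prefs (Fin n) k) (Phat : Prefs (HatId n k) k) : Prop :=
  ValidPrefs Phat ∧ CompletePrefs Phat ∧ ∀ b, (gadgetPrefix P b).IsPrefix (Phat b)

/-! ### Auxiliary lemmas -/

section Aux

variable {k : ℕ}

theorem fadd_val (t : Fin k) (s : ℕ) : (fadd t s).1 = (t.1 + s) % k := rfl

theorem fsucc_eq_fadd (t : Fin k) : fsucc t = fadd t 1 := rfl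

theorem fadd_zero (t : Fin k) : fadd t 0 = t := by
  apply Fin.ext
  simp [fadd_val, Nat.mod_eq_of_lt t.isLt]

theorem fadd_fadd (t : Fin k) (a b : ℕ) : fadd (fadd t a) b = fadd t (a + b) := by
  apply Fin.ext
  simp only [fadd_val]
  rw [Nat.mod_add_mod, Nat.add_assoc]

theorem fsucc_fadd (t : Fin k) (s : ℕ) : fsucc (fadd t s) = fadd t (s + 1) := by
  rw [fsucc_eq_fadd, fadd_fadd]

theorem fadd_mod (t : Fin k) (s : ℕ) : fadd t (s % k) = fadd t s := by
  apply Fin.ext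
  simp only [fadd_val]
  exact Nat.add_mod_mod t.1 s k

theorem fadd_k (t : Fin k) : fadd t k = t := by
  apply Fin.ext
  simp only [fadd_val]
  rw [Nat.add_mod_right]
  exact Nat.mod_eq_of_lt t.isLt

theorem fadd_add_k (t : Fin k) (s : ℕ) : fadd t (s + k) = fadd t s := by
  rw [← fadd_fadd, fadd_k]

theorem fadd_surj (t u : Fin k) : ∃ s : ℕ, fadd t s = u := by
  refine ⟨(k - t.1) + u.1, ?_⟩
  apply Fin.ext
  simp only [fadd_val]
  have h1 : t.1 + ((k - t.1) + u.1) = k + u.1 := by omega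
  rw [h1, Nat.add_comm k u.1, Nat.add_mod_right]
  exact Nat.mod_eq_of_lt u.isLt

theorem fadd_cancel {t : Fin k} {a b : ℕ} (h : fadd t a = fadd t b) : a % k = b % k := by
  have hv : (t.1 + a) % k = (t.1 + b) % k := congrArg Fin.val h
  exact Nat.ModEq.add_left_cancel' t.1 hv

theorem fsucc_ne (hk : 2 ≤ k) (t : Fin k) : fsucc t ≠ t := by
  intro h
  rw [fsucc_eq_fadd] at h
  have := fadd_cancel (h.trans (fadd_zero t).symm)
  rw [Nat.mod_eq_of_lt (by omega), Nat.zero_mod] at this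
  omega

theorem fadd_succ_ne (hk : 2 ≤ k) (t : Fin k) (s : ℕ) : fadd t s ≠ fadd t (s + 1) := by
  intro h
  have := fadd_cancel h
  have h2 : (s + 1) % k = ((s % k) + 1) % k := by
    conv_lhs => rw [← Nat.mod_add_mod]
  rw [h2] at this
  have hs : s % k < k := Nat.mod_lt _ (by omega)
  rcases Nat.lt_or_ge (s % k + 1) k with h3 | h3
  · rw [Nat.mod_eq_of_lt h3] at this; omega
  · have h4 : s % k + 1 = k := by omega
    rw [h4, Nat.mod_self] at this
    omega

theorem indexOf_map_of_injective {α β : Type*} [DecidableEq α] [DecidableEq β]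
    {f : α → β} (hf : Function.Injective f) (l : List α) (x : α) :
    (l.map f).idxOf (f x) = l.idxOf x := by
  induction l with
  | nil => rfl
  | cons a l ih =>
    by_cases h : a = x
    · subst h; simp
    · rw [List.map_cons, List.idxOf_cons_ne _ (fun hc => h (hf hc)),
        List.idxOf_cons_ne _ h, ih]

end Aux
section Gadget

variable {n k : ℕ}

/-- The agent of gadget `β` in column `j` at type level `t`. -/
def ag (β : Agent (Fin n) k) (j : JId k) (t : Fin k) : Agent (HatId n k) k := ((j, β), t)

theorem ag_inj {β β' : Agent (Fin n) k} {j j' : JId k} {t t' : Fin k}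
    (h : ag β j t = ag β' j' t') : β = β' ∧ j = j' ∧ t = t' := by
  unfold ag at h
  obtain ⟨h1, h2⟩ := Prod.mk.injEq .. ▸ h
  obtain ⟨h3, h4⟩ := Prod.mk.injEq .. ▸ h1
  exact ⟨h4, h3, h2⟩

/-- The partner of a member of a family of a matching is the next member. -/
theorem partner_eq {ι : Type} {Pp : Prefs ι k} {μ : Set (Fin k → Agent ι k)}
    (hμ : IsMatching Pp μ) {F : Fin k → Agent ι k} (hF : F ∈ μ) (t : Fin k) :
    partner μ (F t) = F (fsucc t) := by
  have hty : (F t).2 = t := ((hμ.1 F hF) t).1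
  have h : ∃ G ∈ μ, G ((F t).2) = F t := ⟨F, hF, by rw [hty]⟩
  rw [partner, dif_pos h]
  obtain ⟨hmem, heq⟩ := h.choose_spec
  have hGF : h.choose = F := hμ.2 _ hmem F hF (F t).2 (by rw [heq, hty])
  rw [hGF, hty]

theorem partner_self {ι : Type} {μ : Set (Fin k → Agent ι k)} {a : Agent ι k}
    (h : ¬ ∃ F ∈ μ, F a.2 = a) : partner μ a = a := dif_neg h

/-- The column index of the partner of gadget agent `(j, β, t)`, or `(k-1)^2+1` if the
partner is not an agent of gadget `β` (of the next type level). -/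
noncomputable def vv (μhat : Set (Fin k → Agent (HatId n k) k))
    (β : Agent (Fin n) k) (t : Fin k) (j : JId k) : ℕ :=
  if h : ∃ j' : JId k, partner μhat (ag β j t) = ag β j' (fsucc t) then
    (Classical.choose h).1
  else (k-1)^2 + 1

theorem vv_internal {μhat : Set (Fin k → Agent (HatId n k) k)}
    {β : Agent (Fin n) k} {t : Fin k} {j j' : JId k}
    (h : partner μhat (ag β j t) = ag β j' (fsucc t)) : vv μhat β t j = j'.1 := by
  have hex : ∃ j'' : JId k, partner μhat (ag β j t) = ag β j'' (fsucc t) := ⟨j', h⟩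
  rw [vv, dif_pos hex]
  have h3 : ag β j' (fsucc t) = ag β hex.choose (fsucc t) := h.symm.trans hex.choose_spec
  exact (congrArg Fin.val (ag_inj h3).2.1).symm

theorem vv_external {μhat : Set (Fin k → Agent (HatId n k) k)}
    {β : Agent (Fin n) k} {t : Fin k} {j : JId k}
    (h : ∀ j' : JId k, partner μhat (ag β j t) ≠ ag β j' (fsucc t)) :
    vv μhat β t j = (k-1)^2 + 1 := by
  rw [vv, dif_neg]; push_neg; exact h

theorem vv_cases {μhat : Set (Fin k → Agent (HatId n k) k)}
    {β : Agent (Fin n) k} {t : Fin k} {j : JId k} :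
    (∃ j' : JId k, partner μhat (ag β j t) = ag β j' (fsucc t) ∧ vv μhat β t j = j'.1)
      ∨ (vv μhat β t j = (k-1)^2 + 1 ∧
          ∀ j' : JId k, partner μhat (ag β j t) ≠ ag β j' (fsucc t)) := by
  by_cases h : ∃ j' : JId k, partner μhat (ag β j t) = ag β j' (fsucc t)
  · obtain ⟨j', hj'⟩ := h
    exact Or.inl ⟨j', hj', vv_internal hj'⟩
  · push_neg at h
    exact Or.inr ⟨vv_external h, h⟩

/-- Partner-column injectivity. -/
theorem vv_inj {Phat : Prefs (HatId n k) k} {μhat : Set (Fin k → Agent (HatId n k) k)}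
    (hk : 3 ≤ k) (hμ : IsMatching Phat μhat) {β : Agent (Fin n) k} {t : Fin k}
    {j j' : JId k} (h : vv μhat β t j = vv μhat β t j')
    (hlt : vv μhat β t j < (k-1)^2 + 1) : j = j' := by
  have hne : fsucc t ≠ t := fsucc_ne (by omega) t
  rcases vv_cases (μhat := μhat) (β := β) (t := t) (j := j) with ⟨w, hw, hvw⟩ | ⟨hN, _⟩
  · rcases vv_cases (μhat := μhat) (β := β) (t := t) (j := j') with ⟨w', hw', hvw'⟩ | ⟨hN', _⟩
    · have hww' : w = w' := Fin.ext (by rw [← hvw, ← hvw', h])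
      subst hww'
      -- both agents have the same partner
      have hmj : ∃ F ∈ μhat, F ((ag β j t).2) = ag β j t := by
        by_contra hcon
        have := partner_self hcon
        rw [hw] at this
        exact hne ((ag_inj this).2.2)
      have hmj' : ∃ F ∈ μhat, F ((ag β j' t).2) = ag β j' t := by
        by_contra hcon
        have := partner_self hcon
        rw [hw'] at this
        exact hne ((ag_inj this).2.2)
      obtain ⟨F, hF, hFe⟩ := hmj
      obtain ⟨G, hG, hGe⟩ := hmj'
      have hFt : (ag β j t).2 = t := rfl
      have hFt' : (ag β j' t).2 = t := rfl
      rw [hFt] at hFe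
      rw [hFt'] at hGe
      have h1 : partner μhat (ag β j t) = F (fsucc t) := by
        rw [← hFe]; exact partner_eq hμ hF t
      have h2 : partner μhat (ag β j' t) = G (fsucc t) := by
        rw [← hGe]; exact partner_eq hμ hG t
      have hFG : F = G := hμ.2 F hF G hG (fsucc t) (by rw [← h1, ← h2, hw, hw'])
      have : ag β j t = ag β j' t := by rw [← hFe, ← hGe, hFG]
      exact (ag_inj this).2.1
    · rw [h, hN'] at hlt; omega
  · rw [hN] at hlt; omega

end Gadget
section Pidx

theorem beqUnique {α : Type _} (i1 i2 : BEq α) (h1 : @LawfulBEq α i1) (h2 : @LawfulBEq α i2) :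
    i1 = i2 := by
  cases i1 with | mk f =>
  cases i2 with | mk g =>
  congr 1
  funext a b
  have hf : f a b = true ↔ a = b := ⟨fun h => h1.eq_of_beq h, fun h => h ▸ h1.rfl⟩
  have hg : g a b = true ↔ a = b := ⟨fun h => h2.eq_of_beq h, fun h => h ▸ h2.rfl⟩
  cases hfa : f a b <;> cases hga : g a b <;> simp_all

/-- `List.idxOf` with the same instance path as in the definition of `Prefers`. -/
def pidx {ι : Type} [DecidableEq ι] {k : ℕ} (l : List (Agent ι k)) (b : Agent ι k) : ℕ :=
  l.idxOf b

/-- Sanity check: `Prefers` unfolds to a statement about `pidx`. -/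
theorem prefers_iff {ι : Type} [DecidableEq ι] {k : ℕ} (P : Prefs ι k) (a b c : Agent ι k) :
    Prefers P a b c ↔ b ∈ P a ∧ (c ∉ P a ∨ pidx (P a) b < pidx (P a) c) := Iff.rfl

theorem pidx_def {ι : Type} [inst : DecidableEq ι] {k : ℕ} (l : List (Agent ι k))
    (b : Agent ι k) :
    pidx l b = @List.idxOf _ (instBEqOfDecidableEq) b l := by
  unfold pidx
  congr 1
  exact beqUnique _ _
    (@Prod.instLawfulBEq _ _ _ _ (@instLawfulBEq _ inst) (@instLawfulBEq _ _))
    (@instLawfulBEq _ _)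

theorem pidx_append_of_mem {ι : Type} [DecidableEq ι] {k : ℕ}
    {l₁ l₂ : List (Agent ι k)} {b : Agent ι k} (h : b ∈ l₁) :
    pidx (l₁ ++ l₂) b = pidx l₁ b := by
  unfold pidx; exact List.idxOf_append_of_mem h

theorem pidx_append_of_not_mem {ι : Type} [DecidableEq ι] {k : ℕ}
    {l₁ l₂ : List (Agent ι k)} {b : Agent ι k} (h : b ∉ l₁) :
    pidx (l₁ ++ l₂) b = l₁.length + pidx l₂ b := by
  unfold pidx; exact List.idxOf_append_of_notMem h

theorem pidx_lt_length {ι : Type} [DecidableEq ι] {k : ℕ}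
    {l : List (Agent ι k)} {b : Agent ι k} (h : b ∈ l) :
    pidx l b < l.length := by
  unfold pidx
  exact List.idxOf_lt_length_iff.mpr h

theorem pidx_map {α : Type _} [DecidableEq α] {ι' : Type} [DecidableEq ι'] {k : ℕ}
    {f : α → Agent ι' k} (hf : Function.Injective f)
    (l : List α) (x : α) :
    pidx (l.map f) (f x) = l.idxOf x := by
  rw [pidx_def]
  exact indexOf_map_of_injective hf l x

end Pidx

section PrefStep

variable {n k : ℕ}

theorem col_mem (β : Agent (Fin n) k) (t' : Fin k) (w : JId k) :
    ag β w t' ∈ gadgetColumn β t' :=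
  List.mem_map.mpr ⟨w, List.mem_finRange w, rfl⟩

theorem col_length (β : Agent (Fin n) k) (t' : Fin k) :
    (gadgetColumn β t').length = (k-1)^2 + 1 := by
  show ((List.finRange _).map _).length = _
  rw [List.length_map, List.length_finRange]

theorem col_pidx (β : Agent (Fin n) k) (t' : Fin k) (w : JId k) :
    pidx (gadgetColumn β t') (ag β w t') = w.1 := by
  have hcolinj : Function.Injective
      (fun jj : JId k => (((jj, β), t') : Agent (HatId n k) k)) := by
    intro x y hxy
    simpa using congrArg (fun z => z.1.1) hxy
  have h1 := pidx_map (k := k) hcolinj (List.finRange ((k-1)^2+1)) w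
  simpa [List.idxOf_finRange, gadgetColumn, ag] using h1

theorem col_not_mem (β : Agent (Fin n) k) (t' : Fin k) {x : Agent (HatId n k) k}
    (h : ∀ w : JId k, x ≠ ag β w t') : x ∉ gadgetColumn β t' := by
  intro hmem
  obtain ⟨w, _, hwe⟩ := List.mem_map.mp hmem
  exact h w hwe.symm

theorem hatP'_not_mem_gadget (hk : 3 ≤ k) (P : Prefs (Fin n) k) (hP : ValidPrefs P)
    (β : Agent (Fin n) k) (w : JId k) {t' : Fin k} :
    ag β w t' ∉ hatP' P β := by
  intro hmem
  obtain ⟨γ, hγP, hγe⟩ := List.mem_map.mp hmem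
  have hγβ : γ = β := congrArg (fun x => x.1.2) hγe
  have hty := hP.2 β γ hγP
  rw [hγβ] at hty
  exact fsucc_ne (k := k) (by omega) β.2 hty.symm

theorem pref_step (hk : 3 ≤ k) (P : Prefs (Fin n) k) (hP : ValidPrefs P)
    (Phat : Prefs (HatId n k) k) (hlift : IsGadgetLift P Phat)
    (μhat : Set (Fin k → Agent (HatId n k) k)) (β : Agent (Fin n) k)
    (hγ : ∀ γ ∈ P β, partner μhat (ag β 0 β.2) ≠ ag γ 0 (fsucc β.2))
    (t : Fin k) (j j' : JId k) (hj : j.1 < (k-1)^2)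
    (hlt : j'.1 < vv μhat β t j) :
    Prefers Phat (ag β j t) (ag β j' (fsucc t)) (partner μhat (ag β j t)) := by
  obtain ⟨hval, hcomp, hpre⟩ := hlift
  have htmem : ag β j' (fsucc t) ∈ Phat (ag β j t) := hcomp _ _ rfl
  obtain ⟨rest, hrest⟩ := hpre (ag β j t)
  rw [prefers_iff]
  by_cases hA : j = (0 : JId k) ∧ β.2 = t
  · obtain ⟨hj0, hbt⟩ := hA
    subst hbt; subst hj0
    have hpfx : gadgetPrefix P (ag β (0 : JId k) β.2)
        = hatP' P β ++ gadgetColumn β (fsucc β.2) := by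
      show (if _ then _ else _) = _
      rw [if_pos ⟨rfl, rfl⟩]
      rfl
    rw [hpfx] at hrest
    have hidx : ∀ w : JId k, pidx (Phat (ag β (0 : JId k) β.2)) (ag β w (fsucc β.2)) =
        (P β).length + w.1 := by
      intro w
      rw [← hrest, List.append_assoc,
        pidx_append_of_not_mem (hatP'_not_mem_gadget hk P hP β w),
        pidx_append_of_mem (col_mem β (fsucc β.2) w), col_pidx]
      congr 1
      exact List.length_map _
    rcases vv_cases (μhat := μhat) (β := β) (t := β.2) (j := (0 : JId k))
      with ⟨w, hw, hvw⟩ | ⟨hN, hext⟩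
    · refine ⟨htmem, Or.inr ?_⟩
      rw [hw, hidx j', hidx w]
      rw [hvw] at hlt
      omega
    · have hpnot : partner μhat (ag β (0 : JId k) β.2) ∉ hatP' P β := by
        intro hmem
        obtain ⟨γ, hγP, hγe⟩ := List.mem_map.mp hmem
        exact hγ γ hγP hγe.symm
      have hpcol : partner μhat (ag β (0 : JId k) β.2) ∉ gadgetColumn β (fsucc β.2) :=
        col_not_mem β (fsucc β.2) hext
      by_cases hpin : partner μhat (ag β (0 : JId k) β.2) ∈ Phat (ag β (0 : JId k) β.2)
      · refine ⟨htmem, Or.inr ?_⟩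
        rw [hidx j']
        rw [← hrest, List.append_assoc, pidx_append_of_not_mem hpnot,
          pidx_append_of_not_mem hpcol, col_length]
        have h1 : j'.1 < (k-1)^2 + 1 := j'.isLt
        have h2 : (hatP' P β).length = (P β).length := List.length_map _
        omega
      · exact ⟨htmem, Or.inl hpin⟩
  · have hnB : (ag β j t).1.1 ≠ Fin.last ((k - 1) ^ 2) := by
      intro hc
      have hval : j.1 = (k - 1) ^ 2 := by
        simpa [ag] using congrArg Fin.val hc
      omega
    have hpfx : gadgetPrefix P (ag β j t) = gadgetColumn β (fsucc t) := by
      show (if _ then _ else _) = _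
      rw [if_neg (fun hc => hA ⟨hc.1, hc.2⟩), if_neg hnB]
      rfl
    rw [hpfx] at hrest
    have hidx : ∀ w : JId k, pidx (Phat (ag β j t)) (ag β w (fsucc t)) = w.1 := by
      intro w
      rw [← hrest, pidx_append_of_mem (col_mem β (fsucc t) w), col_pidx]
    rcases vv_cases (μhat := μhat) (β := β) (t := t) (j := j)
      with ⟨w, hw, hvw⟩ | ⟨hN, hext⟩
    · refine ⟨htmem, Or.inr ?_⟩
      rw [hw, hidx j', hidx w]
      rw [hvw] at hlt
      omega
    · have hpcol : partner μhat (ag β j t) ∉ gadgetColumn β (fsucc t) :=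
        col_not_mem β (fsucc t) hext
      by_cases hpin : partner μhat (ag β j t) ∈ Phat (ag β j t)
      · refine ⟨htmem, Or.inr ?_⟩
        rw [hidx j']
        rw [← hrest, pidx_append_of_not_mem hpcol, col_length]
        have h1 : j'.1 < (k-1)^2 + 1 := j'.isLt
        omega
      · exact ⟨htmem, Or.inl hpin⟩

end PrefStep
section Combinatorics

variable {n k : ℕ}

theorem sq_ge (hk : 3 ≤ k) : 4 ≤ (k-1)^2 := by
  have h : 2 ≤ k - 1 := by omega
  calc 4 = 2 * 2 := rfl
  _ ≤ (k-1) * (k-1) := Nat.mul_le_mul h h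
  _ = (k-1)^2 := by ring

theorem ph (hk : 3 ≤ k) {Phat : Prefs (HatId n k) k}
    {μhat : Set (Fin k → Agent (HatId n k) k)} (hμ : IsMatching Phat μhat)
    (β : Agent (Fin n) k) (t : Fin k) (m q : ℕ)
    (h2 : q + 2 ≤ m) (hm : m ≤ (k-1)^2) :
    ∃ j : JId k, j.1 < m ∧ q < vv μhat β t j := by
  by_contra hcon
  push_neg at hcon
  have hmN : m < (k-1)^2 + 1 := by omega
  have hcl : (Finset.univ : Finset (Fin (q+1))).card < (Finset.Iio (⟨m, hmN⟩ : JId k)).card := by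
    rw [Fin.card_Iio, Finset.card_univ, Fintype.card_fin]
    show q + 1 < m
    omega
  obtain ⟨j, hj, j', hj', hne, heq⟩ :=
    Finset.exists_ne_map_eq_of_card_lt_of_maps_to hcl
      (f := fun j => (⟨min (vv μhat β t j) q, by omega⟩ : Fin (q+1)))
      (fun j _ => Finset.mem_univ _)
  have hjS : j.1 < m := by simpa [Fin.lt_def] using hj
  have hj'S : j'.1 < m := by simpa [Fin.lt_def] using hj'
  have hv1 := hcon j hjS
  have hv2 := hcon j' hj'S
  have heqv : vv μhat β t j = vv μhat β t j' := by
    have := congrArg Fin.val heq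
    simp only [min_def] at this
    split_ifs at this <;> omega
  exact hne (vv_inj hk hμ heqv (by omega))

theorem pb0 (hk : 3 ≤ k) {Phat : Prefs (HatId n k) k}
    {μhat : Set (Fin k → Agent (HatId n k) k)} (hμ : IsMatching Phat μhat)
    (β : Agent (Fin n) k) :
    ∀ (nn : ℕ) (t : Fin k) (b : ℕ), nn + 1 ≤ min b ((k-1)^2) →
    ∃ c : ℕ → JId k, (c 0).1 < b ∧ (∀ i, i ≤ nn → (c i).1 < (k-1)^2) ∧
      (∀ i, i < nn → (c (i+1)).1 < vv μhat β (fadd t i) (c i)) := by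
  intro nn
  induction nn with
  | zero =>
    intro t b hb
    have h4 := sq_ge hk
    refine ⟨fun _ => ⟨0, by omega⟩, by simp; omega, fun i _ => by simp; omega,
      fun i hi => absurd hi (by omega)⟩
  | succ nn ih =>
    intro t b hb
    obtain ⟨j, hjm, hjv⟩ := ph hk hμ β t (min b ((k-1)^2)) (min b ((k-1)^2) - 2)
      (by omega) (by omega)
    obtain ⟨c', h0, hbd, hlink⟩ := ih (fsucc t) (vv μhat β t j) (by omega)
    refine ⟨fun i => Nat.casesOn i j (fun i' => c' i'), ?_, ?_, ?_⟩
    · show j.1 < b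
      omega
    · intro i hi
      cases i with
      | zero => show j.1 < (k-1)^2; omega
      | succ i' => exact hbd i' (by omega)
    · intro i hi
      cases i with
      | zero =>
        show (c' 0).1 < vv μhat β (fadd t 0) j
        rw [fadd_zero]
        exact h0
      | succ i' =>
        show (c' (i'+1)).1 < vv μhat β (fadd t (i'+1)) (c' i')
        have := hlink i' (by omega)
        rwa [fsucc_eq_fadd, fadd_fadd, Nat.add_comm 1 i'] at this

theorem pb (hk : 3 ≤ k) {Phat : Prefs (HatId n k) k}
    {μhat : Set (Fin k → Agent (HatId n k) k)} (hμ : IsMatching Phat μhat)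
    (β : Agent (Fin n) k) :
    ∀ (nn : ℕ) (t : Fin k) (b q : ℕ), q + 2 + nn ≤ min b ((k-1)^2) →
    ∃ c : ℕ → JId k, (c 0).1 < b ∧ (∀ i, i ≤ nn → (c i).1 < (k-1)^2) ∧
      (∀ i, i < nn → (c (i+1)).1 < vv μhat β (fadd t i) (c i)) ∧
      q < vv μhat β (fadd t nn) (c nn) := by
  intro nn
  induction nn with
  | zero =>
    intro t b q hb
    obtain ⟨j, hjm, hjv⟩ := ph hk hμ β t (min b ((k-1)^2)) q (by omega) (by omega)
    refine ⟨fun _ => j, ?_, ?_, fun i hi => absurd hi (by omega), ?_⟩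
    · show j.1 < b
      omega
    · intro i _
      show j.1 < (k-1)^2
      omega
    · show q < vv μhat β (fadd t 0) j
      rw [fadd_zero]
      exact hjv
  | succ nn ih =>
    intro t b q hb
    obtain ⟨j, hjm, hjv⟩ := ph hk hμ β t (min b ((k-1)^2)) (min b ((k-1)^2) - 2)
      (by omega) (by omega)
    obtain ⟨c', h0, hbd, hlink, hfin⟩ := ih (fsucc t) (vv μhat β t j) q (by omega)
    refine ⟨fun i => Nat.casesOn i j (fun i' => c' i'), ?_, ?_, ?_, ?_⟩
    · show j.1 < b
      omega
    · intro i hi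
      cases i with
      | zero => show j.1 < (k-1)^2; omega
      | succ i' => exact hbd i' (by omega)
    · intro i hi
      cases i with
      | zero =>
        show (c' 0).1 < vv μhat β (fadd t 0) j
        rw [fadd_zero]
        exact h0
      | succ i' =>
        show (c' (i'+1)).1 < vv μhat β (fadd t (i'+1)) (c' i')
        have := hlink i' (by omega)
        rwa [fsucc_eq_fadd, fadd_fadd, Nat.add_comm 1 i'] at this
    · show q < vv μhat β (fadd t (nn+1)) (c' nn)
      have := hfin
      rwa [fsucc_eq_fadd, fadd_fadd, Nat.add_comm 1 nn] at this

theorem assemble (hk : 3 ≤ k) (P : Prefs (Fin n) k) (hP : ValidPrefs P)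
    (Phat : Prefs (HatId n k) k) (hlift : IsGadgetLift P Phat)
    (μhat : Set (Fin k → Agent (HatId n k) k)) (hws : WeaklyStable Phat μhat)
    (β : Agent (Fin n) k)
    (hγ : ∀ γ ∈ P β, partner μhat (ag β 0 β.2) ≠ ag γ 0 (fsucc β.2))
    (t₁ : Fin k) (q : JId k) (hq : q.1 < (k-1)^2)
    (c : ℕ → JId k)
    (h0 : (c 0).1 < vv μhat β t₁ q)
    (hbd : ∀ i, i ≤ k-2 → (c i).1 < (k-1)^2)
    (hlink : ∀ i, i < k-2 → (c (i+1)).1 < vv μhat β (fadd (fadd t₁ 1) i) (c i))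
    (hfin : q.1 < vv μhat β (fadd t₁ (k-1)) (c (k-2))) : False := by
  have hko : 0 < k := by omega
  -- the offset of a level from `base = fadd t₁ 1`
  let o : Fin k → ℕ := fun u => (u.1 + (k - (fadd t₁ 1).1)) % k
  have ho_lt : ∀ u, o u < k := fun u => Nat.mod_lt _ hko
  have ho_inv : ∀ u, fadd (fadd t₁ 1) (o u) = u := by
    intro u
    apply Fin.ext
    show ((fadd t₁ 1).1 + (u.1 + (k - (fadd t₁ 1).1)) % k) % k = u.1
    rw [Nat.add_mod_mod]
    have h1 : (fadd t₁ 1).1 + (u.1 + (k - (fadd t₁ 1).1)) = u.1 + k := by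
      have := (fadd t₁ 1).isLt
      omega
    rw [h1, Nat.add_mod_right]
    exact Nat.mod_eq_of_lt u.isLt
  have ho_succ : ∀ u, o (fsucc u) = (o u + 1) % k := by
    intro u
    show ((u.1 + 1) % k + (k - (fadd t₁ 1).1)) % k = _
    rw [Nat.mod_add_mod]
    have h1 : u.1 + 1 + (k - (fadd t₁ 1).1) = (u.1 + (k - (fadd t₁ 1).1)) + 1 := by omega
    rw [h1, ← Nat.mod_add_mod]
  let D : Fin k → JId k := fun u => if o u = k-1 then q else c (o u)
  let H : Fin k → Agent (HatId n k) k := fun u => ag β (D u) u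
  have hfam : IsFamily Phat H := fun u => ⟨rfl, hlift.2.1 _ _ rfl⟩
  have hblock : ∀ u, Prefers Phat (H u) (H (fsucc u)) (partner μhat (H u)) := by
    intro u
    have hDbd : ∀ u', (D u').1 < (k-1)^2 := by
      intro u'
      show (if o u' = k-1 then q else c (o u')).1 < (k-1)^2
      by_cases h : o u' = k-1
      · rw [if_pos h]; exact hq
      · rw [if_neg h]; exact hbd (o u') (by have := ho_lt u'; omega)
    have hkey : (D (fsucc u)).1 < vv μhat β u (D u) := by
      by_cases h1 : o u = k-1
      · have hu : u = t₁ := by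
          rw [← ho_inv u, h1, fadd_fadd]
          have h2 : 1 + (k-1) = k := by omega
          rw [h2, fadd_k]
        have hsucc : o (fsucc u) = 0 := by
          rw [ho_succ, h1]
          have h2 : k - 1 + 1 = k := by omega
          rw [h2, Nat.mod_self]
        show (if o (fsucc u) = k-1 then q else c (o (fsucc u))).1
            < vv μhat β u (if o u = k-1 then q else c (o u))
        rw [hsucc, if_neg (by omega), if_pos h1, hu]
        exact h0
      · by_cases h2 : o u = k-2
        · have hsucc : o (fsucc u) = k-1 := by
            rw [ho_succ, h2]
            have h3 : k - 2 + 1 = k - 1 := by omega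
            rw [h3]
            exact Nat.mod_eq_of_lt (by omega)
          have hu : u = fadd t₁ (k-1) := by
            rw [← ho_inv u, h2, fadd_fadd]
            congr 1
            omega
          show (if o (fsucc u) = k-1 then q else c (o (fsucc u))).1
              < vv μhat β u (if o u = k-1 then q else c (o u))
          rw [hsucc, if_pos rfl, if_neg h1, h2, hu]
          exact hfin
        · have hilt : o u < k - 2 := by have := ho_lt u; omega
          have hsucc : o (fsucc u) = o u + 1 := by
            rw [ho_succ]
            exact Nat.mod_eq_of_lt (by omega)
          show (if o (fsucc u) = k-1 then q else c (o (fsucc u))).1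
              < vv μhat β u (if o u = k-1 then q else c (o u))
          rw [hsucc, if_neg (by omega), if_neg h1]
          have := hlink (o u) hilt
          rwa [ho_inv u] at this
    exact pref_step hk P hP Phat hlift μhat β hγ u (D u) (D (fsucc u)) (hDbd u) hkey
  exact hws.2 H ⟨hfam, hblock⟩

end Combinatorics
section LemmaG

variable {n k : ℕ}

theorem vv_pred_ne_zero (hk : 3 ≤ k) {Phat : Prefs (HatId n k) k}
    {μhat : Set (Fin k → Agent (HatId n k) k)} (hμ : IsMatching Phat μhat)
    (β : Agent (Fin n) k)
    (hpred : ∀ F ∈ μhat, F β.2 = ag β 0 β.2 → (F (fadd β.2 (k-1))).1.2 ≠ β)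
    (j : JId k) : vv μhat β (fadd β.2 (k-1)) j ≠ 0 := by
  intro h0
  have hfs : fsucc (fadd β.2 (k-1)) = β.2 := by
    rw [fsucc_fadd]
    have h1 : k - 1 + 1 = k := by omega
    rw [h1, fadd_k]
  rcases vv_cases (μhat := μhat) (β := β) (t := fadd β.2 (k-1)) (j := j) with
    ⟨w, hw, hvw⟩ | ⟨hN, _⟩
  · have hw0 : w = 0 := by
      apply Fin.ext
      rw [hvw] at h0
      simpa using h0
    subst hw0
    rw [hfs] at hw
    have hxm : ∃ F ∈ μhat, F ((ag β j (fadd β.2 (k-1))).2) = ag β j (fadd β.2 (k-1)) := by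
      by_contra hcon
      have hps := partner_self hcon
      have hxeq : ag β j (fadd β.2 (k-1)) = ag β 0 β.2 := hps.symm.trans hw
      have hty : fadd β.2 (k-1) = β.2 := (ag_inj hxeq).2.2
      have hc := fadd_cancel (t := β.2) (hty.trans (fadd_zero β.2).symm)
      rw [Nat.mod_eq_of_lt (by omega), Nat.zero_mod] at hc
      omega
    obtain ⟨F, hF, hFe⟩ := hxm
    have hxt : (ag β j (fadd β.2 (k-1))).2 = fadd β.2 (k-1) := rfl
    rw [hxt] at hFe
    have hp : partner μhat (ag β j (fadd β.2 (k-1))) = F (fsucc (fadd β.2 (k-1))) := by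
      rw [← hFe]
      exact partner_eq hμ hF _
    rw [hfs] at hp
    have hFT : F β.2 = ag β 0 β.2 := by rw [← hp, hw]
    have hne := hpred F hF hFT
    rw [hFe] at hne
    exact hne rfl
  · rw [hN] at h0; omega

theorem lemmaG (hk : 3 ≤ k) (P : Prefs (Fin n) k) (hP : ValidPrefs P)
    (Phat : Prefs (HatId n k) k) (hlift : IsGadgetLift P Phat)
    (μhat : Set (Fin k → Agent (HatId n k) k)) (hws : WeaklyStable Phat μhat)
    (β : Agent (Fin n) k)
    (hpred : ∀ F ∈ μhat, F β.2 = ag β 0 β.2 → (F (fadd β.2 (k-1))).1.2 ≠ β) :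
    ∃ γ ∈ P β, partner μhat (ag β 0 β.2) = ag γ 0 (fsucc β.2) := by
  by_contra hcon
  push_neg at hcon
  have hμ : IsMatching Phat μhat := hws.1
  have hF2 : ∀ j : JId k, vv μhat β (fadd β.2 (k-1)) j ≠ 0 :=
    vv_pred_ne_zero hk hμ β hpred
  have h4 := sq_ge hk
  have hle : k - 1 ≤ (k-1)^2 := by
    calc k-1 = (k-1)*1 := by ring
    _ ≤ (k-1)*(k-1) := Nat.mul_le_mul_left _ (by omega)
    _ = (k-1)^2 := by ring
  -- Step 1 : the partner of the non-dummy agent is in a low column of its own gadget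
  have hstep1 : vv μhat β β.2 0 ≤ k - 2 := by
    by_contra hbig
    push_neg at hbig
    obtain ⟨c, h0, hbd, hlink⟩ := pb0 hk hμ β (k-2) (fadd β.2 1) (vv μhat β β.2 0)
      (by omega)
    refine assemble hk P hP Phat hlift μhat hws β hcon β.2 (0 : JId k)
      (by simpa using (by omega : 0 < (k-1)^2)) c h0 hbd hlink ?_
    have hpos := Nat.pos_of_ne_zero (hF2 (c (k-2)))
    simpa using hpos
  -- the partner of the non-dummy agent is internal
  have hvlt : vv μhat β β.2 0 < (k-1)^2 + 1 := by omega
  rcases vv_cases (μhat := μhat) (β := β) (t := β.2) (j := (0:JId k)) with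
    ⟨x₁, hx₁, hvx₁⟩ | ⟨hN, _⟩
  swap
  · rw [hN] at hvlt; omega
  -- the non-dummy agent is matched, in family F
  have hnm : ∃ F ∈ μhat, F ((ag β (0:JId k) β.2).2) = ag β (0:JId k) β.2 := by
    by_contra hcon2
    have hps := partner_self hcon2
    rw [hx₁] at hps
    exact fsucc_ne (by omega) β.2 (ag_inj hps).2.2
  obtain ⟨F, hF, hFT⟩ := hnm
  have hFT' : F β.2 = ag β (0:JId k) β.2 := hFT
  have hy : ∀ s : ℕ, partner μhat (F (fadd β.2 s)) = F (fadd β.2 (s+1)) := by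
    intro s
    rw [← fsucc_fadd]
    exact partner_eq hμ hF _
  have hy0 : F (fadd β.2 0) = ag β (0:JId k) β.2 := by rw [fadd_zero]; exact hFT'
  have h01 : partner μhat (ag β (0:JId k) β.2) = F (fadd β.2 1) := by
    rw [← hy0]; exact hy 0
  -- first non-internal position of the family
  have hQ1 : ∃ j : JId k, F (fadd β.2 1) = ag β j (fadd β.2 1) :=
    ⟨x₁, by rw [← h01, hx₁, fsucc_eq_fadd]⟩
  have hQk : ¬ ∃ j : JId k, F (fadd β.2 (k-1)) = ag β j (fadd β.2 (k-1)) := by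
    rintro ⟨j, hj⟩
    exact hpred F hF hFT' (by rw [hj]; rfl)
  have hscan : ∀ m : ℕ,
      (∀ s, 1 ≤ s → s ≤ m + 1 → ∃ j : JId k, F (fadd β.2 s) = ag β j (fadd β.2 s))
      ∨ (∃ rr, 2 ≤ rr ∧ rr ≤ m + 1 ∧
          (¬ ∃ j : JId k, F (fadd β.2 rr) = ag β j (fadd β.2 rr)) ∧
          ∀ s, 1 ≤ s → s < rr → ∃ j : JId k, F (fadd β.2 s) = ag β j (fadd β.2 s)) := by
    intro m
    induction m with
    | zero =>
      left
      intro s h1 h2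
      have hs1 : s = 1 := by omega
      subst hs1
      exact hQ1
    | succ m ih =>
      rcases ih with h | h
      · by_cases hq : ∃ j : JId k, F (fadd β.2 (m+2)) = ag β j (fadd β.2 (m+2))
        · left
          intro s h1 h2
          rcases Nat.lt_or_ge s (m+2) with h3 | h3
          · exact h s h1 (by omega)
          · have hs : s = m+2 := by omega
            subst hs
            exact hq
        · right
          exact ⟨m+2, by omega, by omega, hq, fun s h1 h2 => h s h1 (by omega)⟩
      · right
        obtain ⟨rr, h2, h3, h4, h5⟩ := h
        exact ⟨rr, h2, by omega, h4, h5⟩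
  rcases hscan (k-2) with h | hpick
  · exact hQk (h (k-1) (by omega) (by omega))
  obtain ⟨rr, hrr2, hrrk', hrrQ, hQ⟩ := hpick
  have hrrk : rr ≤ k - 1 := by omega
  choose! x hx using hQ
  have hr1 : 1 ≤ rr - 1 := by omega
  have hrk : rr - 1 ≤ k - 2 := by omega
  -- column chain facts
  have hx1eq : x 1 = x₁ := by
    have hA := hx 1 (le_refl 1) (by omega)
    have hB : F (fadd β.2 1) = ag β x₁ (fadd β.2 1) := by
      rw [← h01, hx₁, fsucc_eq_fadd]
    exact (ag_inj (hA.symm.trans hB)).2.1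
  have hx1le : (x 1).1 ≤ k - 2 := by
    rw [hx1eq]
    omega
  have hlinkv : ∀ s, 1 ≤ s → s + 1 ≤ rr - 1 →
      vv μhat β (fadd β.2 s) (x s) = (x (s+1)).1 := by
    intro s h1 h2
    apply vv_internal
    have hgoal : partner μhat (F (fadd β.2 s)) = F (fadd β.2 (s+1)) := hy s
    rw [hx s h1 (by omega), hx (s+1) (by omega) (by omega)] at hgoal
    rw [fsucc_fadd]
    exact hgoal
  have hexit : vv μhat β (fadd β.2 (rr - 1)) (x (rr - 1))
      = (k-1)^2+1 := by
    apply vv_external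
    intro j' hj'
    rw [← hx (rr - 1) (by omega) (by omega)] at hj'
    rw [hy (rr - 1)] at hj'
    apply hrrQ
    refine ⟨j', ?_⟩
    rw [show rr = (rr - 1) + 1 from by omega]
    rw [hj', fsucc_fadd]
  by_cases hjump : ∃ m, 1 ≤ m ∧ m + 1 ≤ rr - 1 ∧ (x m).1 + k ≤ (x (m+1)).1
  · obtain ⟨m, hm1, hmr, hjmp⟩ := hjump
    have hb : vv μhat β (fadd β.2 m) (x m) = (x (m+1)).1 := hlinkv m hm1 hmr
    obtain ⟨c, h0, hbd, hlink, hfin⟩ := pb hk hμ β (k-2) (fadd (fadd β.2 m) 1)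
      ((x (m+1)).1) ((x m).1)
      (by have hlt := (x (m+1)).isLt; omega)
    refine assemble hk P hP Phat hlift μhat hws β hcon (fadd β.2 m) (x m)
      (by have hlt := (x (m+1)).isLt; omega) c (by rw [hb]; exact h0) hbd hlink ?_
    have hfin' := hfin
    rwa [fadd_fadd, (by omega : 1 + (k-2) = k-1)] at hfin'
  · push_neg at hjump
    have hclimb : ∀ i, 1 + i ≤ rr - 1 → (x (1+i)).1 ≤ (k-2) + i*(k-1) := by
      intro i
      induction i with
      | zero => intro _; simpa using hx1le
      | succ i ih =>
        intro hle2
        have h1 := ih (by omega)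
        have h2 := hjump (1+i) (by omega) (by omega)
        have hmul : (i+1)*(k-1) = i*(k-1)+(k-1) := by ring
        have hre : 1 + (i+1) = (1+i) + 1 := by omega
        rw [hre]
        omega
    have hxr : (x (rr - 1)).1 + k ≤ (k-1)^2 := by
      have h1 := hclimb (rr - 1 - 1) (by omega)
      have h2 : 1 + (rr - 1 - 1) = rr - 1 := by omega
      rw [h2] at h1
      have h3 : (rr - 1 - 1) ≤ k-3 := by omega
      have h4' : (rr - 1 - 1)*(k-1) ≤ (k-3)*(k-1) := Nat.mul_le_mul_right _ h3
      have h5 : (k-2) + (k-3)*(k-1) + k ≤ (k-1)^2 := by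
        obtain ⟨K, hK⟩ : ∃ K, k = K + 3 := ⟨k - 3, by omega⟩
        subst hK
        have e1 : (K+3) - 2 = K+1 := by omega
        have e2 : (K+3) - 3 = K := by omega
        have e3 : (K+3) - 1 = K+2 := by omega
        rw [e1, e2, e3]
        nlinarith [sq_nonneg K]
      omega
    obtain ⟨c, h0, hbd, hlink, hfin⟩ := pb hk hμ β (k-2)
      (fadd (fadd β.2 (rr - 1)) 1) ((k-1)^2+1) ((x (rr - 1)).1)
      (by omega)
    refine assemble hk P hP Phat hlift μhat hws β hcon (fadd β.2 (rr - 1))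
      (x (rr - 1)) (by omega) c (by rw [hexit]; exact h0) hbd hlink ?_
    have hfin' := hfin
    rwa [fadd_fadd, (by omega : 1 + (k-2) = k-1)] at hfin'

end LemmaG
section Main

variable {n k : ℕ}

theorem main_step (hk : 3 ≤ k) (P : Prefs (Fin n) k) (hP : ValidPrefs P)
    (Phat : Prefs (HatId n k) k) (hlift : IsGadgetLift P Phat)
    (μhat : Set (Fin k → Agent (HatId n k) k)) (hws : WeaklyStable Phat μhat)
    (μ0 : Set (Fin k → Agent (Fin n) k))
    (hμ0mem : ∀ G, G ∈ μ0 ↔ ∀ t, (G t).2 = t ∧ G (fsucc t) ∈ P (G t) ∧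
        partner μhat (ag (G t) 0 (G t).2) = ag (G (fsucc t)) 0 (G (fsucc t)).2)
    (hmatch : IsMatching P μ0)
    (t : Fin k) (α β' : Agent (Fin n) k) (hα2 : α.2 = t)
    (hβ' : β' ∈ P α) (hpref : Prefers P α β' (partner μ0 α)) :
    Prefers Phat (ag α 0 t) (ag β' 0 (fsucc t)) (partner μhat (ag α 0 t)) := by
  subst hα2
  have hμ : IsMatching Phat μhat := hws.1
  have hβ'2 : β'.2 = fsucc α.2 := hP.2 α β' hβ'
  have htmem : ag β' 0 (fsucc α.2) ∈ Phat (ag α 0 α.2) := hlift.2.1 _ _ rfl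
  obtain ⟨rest, hrest⟩ := hlift.2.2 (ag α 0 α.2)
  have hpfx : gadgetPrefix P (ag α 0 α.2) = hatP' P α ++ gadgetColumn α (fsucc α.2) := by
    show (if _ then _ else _) = _
    rw [if_pos ⟨rfl, rfl⟩]
    rfl
  rw [hpfx] at hrest
  have hmapinj : Function.Injective (fun b : Agent (Fin n) k =>
      ((((0:JId k), b), fsucc α.2) : Agent (HatId n k) k)) := by
    intro a b hab
    simpa using congrArg (fun z => z.1.2) hab
  have hidx : ∀ γ, γ ∈ P α → pidx (Phat (ag α 0 α.2)) (ag γ 0 (fsucc α.2)) =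
      pidx (P α) γ := by
    intro γ hγ
    have hmem : ag γ 0 (fsucc α.2) ∈ hatP' P α :=
      List.mem_map.mpr ⟨γ, hγ, rfl⟩
    rw [← hrest, List.append_assoc, pidx_append_of_mem hmem, pidx_def (ι := Fin n)]
    exact pidx_map (k := k) hmapinj (P α) γ
  rw [prefers_iff] at hpref ⊢
  by_cases hm : ∃ G ∈ μ0, G (α.2) = α
  · obtain ⟨G, hG, hGe⟩ := hm
    have hpart : partner μ0 α = G (fsucc α.2) := by
      have hp0 := partner_eq hmatch hG α.2
      rw [hGe] at hp0
      exact hp0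
    have hGμ := (hμ0mem G).mp hG α.2
    have hGμ' := (hμ0mem G).mp hG (fsucc α.2)
    have hα' : G (fsucc α.2) ∈ P α := by
      have h1 := hGμ.2.1
      rw [hGe] at h1
      exact h1
    have hphat : partner μhat (ag α 0 α.2) = ag (G (fsucc α.2)) 0 ((G (fsucc α.2)).2) := by
      have h1 := hGμ.2.2
      rw [hGe] at h1
      exact h1
    obtain ⟨hbm, hor⟩ := hpref
    rw [hpart] at hor
    have hidxlt : pidx (P α) β' < pidx (P α) (G (fsucc α.2)) := by
      rcases hor with h | h
      · exact absurd hα' h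
      · exact h
    refine ⟨htmem, Or.inr ?_⟩
    rw [hphat, hGμ'.1, hidx β' hβ', hidx _ hα']
    exact hidxlt
  · have hkey : ∀ γ ∈ P α, partner μhat (ag α 0 α.2) ≠ ag γ 0 (fsucc α.2) := by
      intro γ hγ hpeq
      have hγ2 : γ.2 = fsucc α.2 := hP.2 α γ hγ
      have hnm : ∃ F₀ ∈ μhat, F₀ ((ag α 0 α.2).2) = ag α 0 α.2 := by
        by_contra hcon2
        have hps := partner_self hcon2
        rw [hpeq] at hps
        exact fsucc_ne (by omega) α.2 (ag_inj hps).2.2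
      obtain ⟨F₀, hF₀, hF₀T⟩ := hnm
      have hF₀T' : F₀ α.2 = ag α 0 α.2 := hF₀T
      have hy : ∀ s : ℕ, partner μhat (F₀ (fadd α.2 s)) = F₀ (fadd α.2 (s+1)) := by
        intro s
        rw [← fsucc_fadd]
        exact partner_eq hμ hF₀ _
      have hQQ : ∀ s : ℕ, ∃ δ δ' : Agent (Fin n) k,
          F₀ (fadd α.2 s) = ag δ 0 (fadd α.2 s) ∧
          F₀ (fadd α.2 (s+1)) = ag δ' 0 (fadd α.2 (s+1)) ∧
          δ.2 = fadd α.2 s ∧ δ'.2 = fadd α.2 (s+1) ∧ δ' ∈ P δ := by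
        intro s
        induction s with
        | zero =>
          refine ⟨α, γ, ?_, ?_, (fadd_zero α.2).symm, by rw [hγ2, fsucc_eq_fadd], hγ⟩
          · rw [fadd_zero]
            exact hF₀T'
          · have h1 := hy 0
            rw [fadd_zero, hF₀T', hpeq] at h1
            rw [← h1, fsucc_eq_fadd]
        | succ s ih =>
          obtain ⟨δ, δ', h1, h2, hδ2, hδ'2, h3⟩ := ih
          have hpredδ' : ∀ F' ∈ μhat, F' δ'.2 = ag δ' 0 δ'.2 →
              (F' (fadd δ'.2 (k-1))).1.2 ≠ δ' := by
            intro F' hF' hFe'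
            rw [hδ'2] at hFe'
            have hFF : F' = F₀ := hμ.2 F' hF' F₀ hF₀ (fadd α.2 (s+1)) (by rw [hFe', h2])
            subst hFF
            intro hcontra
            rw [hδ'2, fadd_fadd] at hcontra
            have harith : s + 1 + (k-1) = s + k := by omega
            rw [harith, fadd_add_k, h1] at hcontra
            have hδδ' : δ = δ' := hcontra
            exact fadd_succ_ne (by omega) α.2 s (by rw [← hδ2, hδδ', hδ'2])
          obtain ⟨ε, hεP, hεpart⟩ := lemmaG hk P hP Phat hlift μhat hws δ' hpredδ'
          have hε2 : ε.2 = fsucc δ'.2 := hP.2 δ' ε hεP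
          refine ⟨δ', ε, h2, ?_, hδ'2, ?_, hεP⟩
          · have h5 : partner μhat (F₀ (fadd α.2 (s+1))) = F₀ (fadd α.2 (s+1+1)) :=
              hy (s+1)
            have h6 : F₀ (fadd α.2 (s+1)) = ag δ' 0 δ'.2 := by rw [h2, hδ'2]
            rw [h6, hεpart] at h5
            rw [← h5, hδ'2, fsucc_fadd]
          · rw [hε2, hδ'2, fsucc_fadd]
      -- build the family of μ0 containing α, contradicting hm
      refine hm ⟨fun u => (F₀ u).1.2, ?_, ?_⟩
      · rw [hμ0mem]
        intro u
        obtain ⟨s, hs⟩ := fadd_surj α.2 u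
        obtain ⟨δ, δ', h1, h2, hδ2, hδ'2, h3⟩ := hQQ s
        have h5 := hy s
        rw [h1, h2] at h5
        subst hs
        rw [fsucc_fadd, h1, h2]
        simp only [ag] at h5 ⊢
        refine ⟨hδ2, h3, ?_⟩
        rw [hδ2, hδ'2]
        exact h5
      · show (F₀ α.2).1.2 = α
        rw [hF₀T']
        rfl
    obtain ⟨hbm, _⟩ := hpref
    refine ⟨htmem, ?_⟩
    by_cases hpin : partner μhat (ag α 0 α.2) ∈ Phat (ag α 0 α.2)
    · refine Or.inr ?_
      rw [hidx β' hβ']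
      have hnot1 : partner μhat (ag α 0 α.2) ∉ hatP' P α := by
        intro hmem
        obtain ⟨γ, hγP, hγe⟩ := List.mem_map.mp hmem
        exact hkey γ hγP hγe.symm
      rw [← hrest, List.append_assoc, pidx_append_of_not_mem hnot1]
      have hlen : pidx (P α) β' < (P α).length := pidx_lt_length hbm
      have hlen2 : (hatP' P α).length = (P α).length := List.length_map _
      omega
    · exact Or.inl hpin

end Main

/-- If the input `k`-DSMI-CYC instance of the gadget reduction has no
weakly stable matching, then neither does the produced `k`-DSM-CYC instance. -/
theorem gadget_instability {n k : ℕ} (hk : 3 ≤ k) (P : Prefs (Fin n) k)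
    (hP : ValidPrefs P) (Phat : Prefs (HatId n k) k) (hlift : IsGadgetLift P Phat)
    (hno : ∀ μ : Set (Fin k → Agent (Fin n) k), ¬ WeaklyStable P μ) :
    ∀ μhat : Set (Fin k → Agent (HatId n k) k), ¬ WeaklyStable Phat μhat := by
  intro μhat hws
  set μ0 : Set (Fin k → Agent (Fin n) k) :=
    {G | ∀ t, (G t).2 = t ∧ G (fsucc t) ∈ P (G t) ∧
      partner μhat (ag (G t) 0 (G t).2) = ag (G (fsucc t)) 0 (G (fsucc t)).2} with hμ0def
  have hμ0mem : ∀ G, G ∈ μ0 ↔ ∀ t, (G t).2 = t ∧ G (fsucc t) ∈ P (G t) ∧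
      partner μhat (ag (G t) 0 (G t).2) = ag (G (fsucc t)) 0 (G (fsucc t)).2 := by
    intro G
    rw [hμ0def]
    exact Iff.rfl
  have hmatch : IsMatching P μ0 := by
    constructor
    · intro G hG t
      have h := (hμ0mem G).mp hG t
      exact ⟨h.1, h.2.1⟩
    · intro G hG G' hG' t ht
      have key : ∀ s, G (fadd t s) = G' (fadd t s) := by
        intro s
        induction s with
        | zero => rw [fadd_zero]; exact ht
        | succ s ih =>
          have h1 := ((hμ0mem G).mp hG (fadd t s)).2.2
          have h2 := ((hμ0mem G').mp hG' (fadd t s)).2.2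
          rw [ih] at h1
          have h4 := (ag_inj (h1.symm.trans h2)).1
          rw [fsucc_fadd] at h4
          exact h4
      funext u
      obtain ⟨s, hs⟩ := fadd_surj t u
      rw [← hs]
      exact key s
  have hnWS := hno μ0
  rw [WeaklyStable] at hnWS
  push_neg at hnWS
  obtain ⟨F, hFblock⟩ := hnWS hmatch
  obtain ⟨hFfam, hFpref⟩ := hFblock
  refine hws.2 (fun t => ag (F t) 0 t) ⟨fun t => ⟨rfl, hlift.2.1 _ _ rfl⟩, ?_⟩
  intro t
  exact main_step hk P hP Phat hlift μhat hws μ0 hμ0mem hmatch t (F t) (F (fsucc t))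
    (hFfam t).1 (hFfam t).2 (hFpref t)
end
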